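/- arXiv:0804.4679 — 8 statements merged into one kernel-verified Lean document; each statement's English description precedes it below -/
import Mathlib

section
/- Let G, A, B be groups, with B acting on a finite set 𝓑, and let φ : G → B be a group homomorphism such that the induced action of G on 𝓑 (via φ) is transitive. Fix b ∈ 𝓑 and let S = φ⁻¹(Stab_B(b)) ≤ G. Then the map Ψ sending a homomorphism ρ : G → A ≀ B with π ∘ ρ = φ to the homomorphism ρ_b : S → A (defined by ρ_b(s) = f_s(b) where ρ(s) = (f_s, φ(s))) is surjective onto the set of all group homomorphisms S → A, and every fiber of Ψ has cardinality |A|^(|𝓑| − 1) (assuming A is finite). -/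
/-- The automorphism action of `B` on functions `𝓑 → A`, given by
`(b • f) j = f (b⁻¹ • j)`. -/
def wreathAut (A B 𝓑 : Type*) [Group A] [Group B] [MulAction B 𝓑] :
    B →* MulAut (𝓑 → A) where
  toFun b :=
    { toFun := fun f j => f (b⁻¹ • j)
      invFun := fun f j => f (b • j)
      left_inv := fun f => by funext j; simp
      right_inv := fun f => by funext j; simp
      map_mul' := fun f g => rfl }
  map_one' := by ext f j; simp
  map_mul' b₁ b₂ := by ext f j; simp [mul_smul]

/-- The wreath product `A ≀ B`, with `B` acting on the finite set `𝓑`: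
the semidirect product `(𝓑 → A) ⋊ B`. -/
abbrev WreathProduct (A B 𝓑 : Type*) [Group A] [Group B] [MulAction B 𝓑] : Type _ :=
  SemidirectProduct (𝓑 → A) B (wreathAut A B 𝓑)
/-!
Choose a transversal `t : 𝓑 → G`, with `φ (t j) • b = j` and `t b = 1`. Then
`g * t (φ(g)⁻¹ • j) = t j * c(g, j)` with `c(g, j) ∈ S`, and `c` is a cocycle. For a lift `ρ`
over `φ` this factorization gives `f_g(j) = u j * ρ_b(c(g, j)) * (u (φ(g)⁻¹ • j))⁻¹`, where
`u j = f_{t j}(j)`, and conversely, because `c` is a cocycle, the same formula defines a lift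
for every `ψ : S →* A` and every `u : 𝓑 → A`. Its `ρ_b` is `ψ` as soon as `u b = 1`, so the
fiber over `ψ` is in bijection with `{u : 𝓑 → A // u b = 1}`.
-/

open SemidirectProduct MulAction

lemma Nat.card_subtype_apply_eq {α M : Type*} [Finite α] (a : α) (m : M) :
    Nat.card {u : α → M // u a = m} = Nat.card M ^ (Nat.card α - 1) := by
  classical
  have := Fintype.ofFinite α
  have e : {u : α → M // u a = m} ≃ ({j // j ≠ a} → M) :=
    ((Equiv.funSplitAt a M).subtypeEquiv (q := fun p => p.1 = m) fun _ => Iff.rfl).trans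
      ((Equiv.prodSubtypeFstEquivSubtypeProd (p := (· = m))).trans (Equiv.uniqueProd _ _))
  rw [Nat.card_congr e, Nat.card_fun, Nat.card_eq_fintype_card (α := {j // j ≠ a}),
    Nat.card_eq_fintype_card (α := α), Fintype.card_subtype_compl, Fintype.card_subtype_eq]

section

variable {G A B 𝓑 : Type*} [Group G] [Group A] [Group B] [MulAction B 𝓑]

@[simp]
lemma wreathAut_apply (c : B) (f : 𝓑 → A) (j : 𝓑) : wreathAut A B 𝓑 c f j = f (c⁻¹ • j) := rfl

lemma inv_smul_eq_of_mem_comap_stabilizer {φ : G →* B} {b : 𝓑} {g : G}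
    (hg : g ∈ (stabilizer B b).comap φ) : (φ g)⁻¹ • b = b :=
  inv_smul_eq_iff.mpr hg.symm

lemma exists_transversal {φ : G →* B} {b : 𝓑} (h : ∀ j, ∃ g, φ g • b = j) :
    ∃ t : 𝓑 → G, (∀ j, φ (t j) • b = j) ∧ t b = 1 := by
  classical
  choose t ht using h
  refine ⟨Function.update t b 1, fun j => ?_, Function.update_self b 1 t⟩
  by_cases hj : j = b
  · subst hj; simp
  · simp [Function.update_of_ne hj, ht]

abbrev WreathLift (A 𝓑 : Type*) [Group A] [MulAction B 𝓑] (φ : G →* B) :=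
  {ρ : G →* WreathProduct A B 𝓑 // rightHom.comp ρ = φ}

namespace WreathLift

variable {φ : G →* B} (ρ : WreathLift A 𝓑 φ)

lemma right_apply (g : G) : (ρ.1 g).right = φ g := DFunLike.congr_fun ρ.2 g

lemma left_mul (x y : G) (j : 𝓑) :
    (ρ.1 (x * y)).left j = (ρ.1 x).left j * (ρ.1 y).left ((φ x)⁻¹ • j) := by
  rw [map_mul, mul_left, Pi.mul_apply, wreathAut_apply, right_apply]

/-- The homomorphism `ρ_b`. -/
def restrict (b : 𝓑) : (stabilizer B b).comap φ →* A :=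
  MonoidHom.mk' (fun s => (ρ.1 s).left b) fun s s' => by
    rw [Subgroup.coe_mul, left_mul, inv_smul_eq_of_mem_comap_stabilizer s.2]

end WreathLift

section Transversal

variable {φ : G →* B} {b : 𝓑} {t : 𝓑 → G} (ht : ∀ j, φ (t j) • b = j)

def transversalCocycle (g : G) (j : 𝓑) : (stabilizer B b).comap φ :=
  ⟨(t j)⁻¹ * g * t ((φ g)⁻¹ • j), by
    simp only [Subgroup.mem_comap, mem_stabilizer_iff, map_mul, map_inv, mul_smul, ht,
      smul_inv_smul, inv_smul_eq_iff]⟩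

lemma coe_transversalCocycle (g : G) (j : 𝓑) :
    (transversalCocycle ht g j : G) = (t j)⁻¹ * g * t ((φ g)⁻¹ • j) := rfl

lemma transversalCocycle_mul (g h : G) (j : 𝓑) :
    transversalCocycle ht (g * h) j =
      transversalCocycle ht g j * transversalCocycle ht h ((φ g)⁻¹ • j) := by
  ext
  simp only [Subgroup.coe_mul, coe_transversalCocycle, map_mul, mul_inv_rev, mul_smul]
  group

lemma transversalCocycle_of_mem (htb : t b = 1) (s : (stabilizer B b).comap φ) :
    transversalCocycle ht s b = s := by
  ext
  rw [coe_transversalCocycle, inv_smul_eq_of_mem_comap_stabilizer s.2, htb, inv_one, one_mul,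
    mul_one]

lemma transversalCocycle_transversal (htb : t b = 1) (j : 𝓑) :
    transversalCocycle ht (t j) j = 1 := by
  ext
  rw [coe_transversalCocycle, inv_smul_eq_iff.mpr (ht j).symm, htb, inv_mul_cancel, mul_one,
    OneMemClass.coe_one]

namespace WreathLift

def induced (ψ : (stabilizer B b).comap φ →* A) (u : 𝓑 → A) : WreathLift A 𝓑 φ :=
  ⟨MonoidHom.mk'
      (fun g => ⟨fun j => u j * ψ (transversalCocycle ht g j) * (u ((φ g)⁻¹ • j))⁻¹, φ g⟩)
      fun g h => by
        refine SemidirectProduct.ext (funext fun j => ?_) (map_mul φ g h)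
        simp only [mul_left, Pi.mul_apply, wreathAut_apply, transversalCocycle_mul, map_mul,
          mul_inv_rev, mul_smul]
        group,
    MonoidHom.ext fun _ => rfl⟩

variable (ψ : (stabilizer B b).comap φ →* A) {u : 𝓑 → A}

lemma induced_left (g : G) (j : 𝓑) :
    ((induced ht ψ u).1 g).left j = u j * ψ (transversalCocycle ht g j) * (u ((φ g)⁻¹ • j))⁻¹ :=
  rfl

lemma restrict_induced (htb : t b = 1) (hu : u b = 1) : (induced ht ψ u).restrict b = ψ := by
  ext s
  simp only [restrict, MonoidHom.mk'_apply, induced_left, inv_smul_eq_of_mem_comap_stabilizer s.2,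
    transversalCocycle_of_mem ht htb, hu, one_mul, inv_one, mul_one]

lemma induced_left_transversal (htb : t b = 1) (hu : u b = 1) (j : 𝓑) :
    ((induced ht ψ u).1 (t j)).left j = u j := by
  rw [induced_left, transversalCocycle_transversal ht htb, inv_smul_eq_iff.mpr (ht j).symm, hu,
    map_one, inv_one, mul_one, mul_one]

lemma induced_restrict (ρ : WreathLift A 𝓑 φ) :
    induced ht (ρ.restrict b) (fun j => (ρ.1 (t j)).left j) = ρ := by
  refine Subtype.ext <| MonoidHom.ext fun g =>
    SemidirectProduct.ext (funext fun j => ?_) (ρ.right_apply g).symm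
  have factor : g * t ((φ g)⁻¹ • j) = t j * transversalCocycle ht g j := by
    rw [coe_transversalCocycle]; group
  have := congrArg (fun x => (ρ.1 x).left j) factor
  simp only [ρ.left_mul, inv_smul_eq_iff.mpr (ht j).symm] at this
  rw [induced_left]
  exact mul_inv_eq_of_eq_mul this.symm

def restrictFiberEquiv (htb : t b = 1) :
    {ρ : WreathLift A 𝓑 φ // ρ.restrict b = ψ} ≃ {u : 𝓑 → A // u b = 1} where
  toFun ρ := ⟨fun j => (ρ.1.1 (t j)).left j,
    show (ρ.1.1 (t b)).left b = 1 by rw [htb, map_one]; rfl⟩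
  invFun u := ⟨induced ht ψ u, restrict_induced ht ψ htb u.2⟩
  left_inv := by
    rintro ⟨ρ, rfl⟩
    exact Subtype.ext (induced_restrict ht ρ)
  right_inv u := Subtype.ext (funext (induced_left_transversal ht ψ htb u.2))

end WreathLift

end Transversal

end

theorem wreath_lift_fiber_card_transitive_general
    {G A B 𝓑 : Type*} [Group G] [Group A] [Group B] [MulAction B 𝓑] [Finite 𝓑]
    (φ : G →* B) (htrans : ∀ x y : 𝓑, ∃ g : G, φ g • x = y) (b : 𝓑) :
    ∃ Ψ : {ρ : G →* WreathProduct A B 𝓑 // SemidirectProduct.rightHom.comp ρ = φ} →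
        (↥((MulAction.stabilizer B b).comap φ) →* A),
      (∀ ρ s, Ψ ρ s = ((ρ : G →* WreathProduct A B 𝓑) (s : G)).left b) ∧
      Function.Surjective Ψ ∧
      ∀ ψ, Nat.card {ρ // Ψ ρ = ψ} = Nat.card A ^ (Nat.card 𝓑 - 1) := by
  obtain ⟨t, ht, htb⟩ := exists_transversal (htrans b)
  refine ⟨fun ρ => WreathLift.restrict ρ b, fun ρ s => rfl, fun ψ => ?_, fun ψ => ?_⟩
  · exact ⟨WreathLift.induced ht ψ 1, WreathLift.restrict_induced ht ψ htb rfl⟩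
  · exact (Nat.card_congr (WreathLift.restrictFiberEquiv ht ψ htb)).trans
      (Nat.card_subtype_apply_eq b 1)

/-- If `φ : G →* B` induces a transitive action of `G` on `𝓑`, `b ∈ 𝓑`,
and `S = φ⁻¹(Stab_B b)`, then the map `Ψ` sending a homomorphism `ρ : G →* A ≀ B` lying
over `φ` to the homomorphism `ρ_b : S →* A`, `s ↦ f_s b` (where `ρ s = (f_s, φ s)`),
is surjective onto all homomorphisms `S →* A`, with all fibers of size `|A|^(|𝓑| - 1)`. -/
theorem wreath_lift_fiber_card_transitive
    {G A B 𝓑 : Type*} [Group G] [Group A] [Group B] [Finite A] [MulAction B 𝓑] [Finite 𝓑]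
    (φ : G →* B) (htrans : ∀ x y : 𝓑, ∃ g : G, φ g • x = y) (b : 𝓑) :
    ∃ Ψ : {ρ : G →* WreathProduct A B 𝓑 // SemidirectProduct.rightHom.comp ρ = φ} →
        (↥((MulAction.stabilizer B b).comap φ) →* A),
      (∀ ρ s, Ψ ρ s = ((ρ : G →* WreathProduct A B 𝓑) (s : G)).left b) ∧
      Function.Surjective Ψ ∧
      ∀ ψ, Nat.card {ρ // Ψ ρ = ψ} = Nat.card A ^ (Nat.card 𝓑 - 1) :=
  wreath_lift_fiber_card_transitive_general φ htrans b
end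

section
/- Let G, A, B be groups, with A finite and B acting on a finite set 𝓑, and let φ : G → B be any group homomorphism. Let the action of G on 𝓑 via φ have exactly r orbits, choose orbit representatives b₁, …, b_r, and set S_i = φ⁻¹(Stab_B(b_i)) ≤ G. Then the map Ψ sending a homomorphism ρ : G → A ≀ B with π ∘ ρ = φ to the tuple (ρ_{b₁}, …, ρ_{b_r}) is surjective onto the product of the sets of group homomorphisms Hom(S₁, A) × ⋯ × Hom(S_r, A), and every fiber of Ψ has cardinality |A|^(|𝓑| − r). -/
/-- The set of orbits of the action of `G` on `𝓑` induced by `φ : G →* B`. -/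
def orbitQuot {G B : Type*} (𝓑 : Type*) [Group G] [Group B] [MulAction B 𝓑]
    (φ : G →* B) : Type _ :=
  letI : MulAction G 𝓑 := MulAction.compHom 𝓑 φ
  MulAction.orbitRel.Quotient G 𝓑

/-- The orbit (for the action of `G` on `𝓑` induced by `φ`) of an element of `𝓑`. -/
def orbitQuotMk {G B : Type*} (𝓑 : Type*) [Group G] [Group B] [MulAction B 𝓑]
    (φ : G →* B) (x : 𝓑) : orbitQuot 𝓑 φ :=
  letI : MulAction G 𝓑 := MulAction.compHom 𝓑 φ
  Quotient.mk'' x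

/-!
Write `[j]` for the orbit of `j` and `S_ω = φ⁻¹(Stab_B (rep ω))`, and fix a transversal
`t : 𝓑 → G` with `φ (t j) • rep [j] = j` and `t (rep ω) = 1`. For `s : G` the element
`(t j)⁻¹ * s * t ((φ s)⁻¹ • j)` lies in `S_[j]`, so a tuple `ψ` of homomorphisms `S_ω →* A`
induces the lift `s ↦ (j ↦ ψ_[j] ((t j)⁻¹ * s * t ((φ s)⁻¹ • j)), φ s)`, whose component at
`rep ω` is `ψ ω`. Conversely every lift `ρ` is the conjugate, by `c_ρ j = (ρ (t j)).left j`, of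
the lift induced by its own components. Hence lifts correspond bijectively to pairs `(ψ, c)` with
`c (rep ω) = 1`, and there are `|A| ^ (|𝓑| - r)` such `c`.
-/

open MulAction SemidirectProduct

theorem card_subtype_funs_eq_one_of_injective {ι α M : Type*} [One M] [Finite α]
    {f : ι → α} (hf : Function.Injective f) :
    Nat.card {c : α → M // ∀ i, c (f i) = 1} = Nat.card M ^ (Nat.card α - Nat.card ι) := by
  classical
  let e : {c : α → M // ∀ i, c (f i) = 1} ≃ (((Set.range f)ᶜ : Set α) → M) :=
    { toFun := fun c j => c.1 j
      invFun := fun d => ⟨fun j => if h : j ∈ Set.range f then 1 else d ⟨j, h⟩,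
        fun i => dif_pos ⟨i, rfl⟩⟩
      left_inv := fun c => by
        ext j
        by_cases h : j ∈ Set.range f
        · obtain ⟨i, rfl⟩ := h
          simp [c.2 i]
        · simp [h]
      right_inv := fun d => funext fun j => dif_neg j.2 }
  rw [Nat.card_congr e, Nat.card_fun, Nat.card_coe_set_eq, Set.ncard_compl,
    ← Nat.card_coe_set_eq, Nat.card_range_of_injective hf]

theorem card_fiber_fst_of_equiv {X Y Z : Type*} (e : X ≃ Y × Z) (y : Y) :
    Nat.card {x // (e x).1 = y} = Nat.card Z :=
  Nat.card_congr <| (e.subtypeEquiv fun _ => Iff.rfl).trans <|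
    Equiv.prodSubtypeFstEquivSubtypeProd.trans <| Equiv.uniqueProd Z {a // a = y}

theorem MonoidHom.apply_mk_congr_index {G A ι : Type*} [Group G] [Group A]
    {H : ι → Subgroup G} (ψ : ∀ i, H i →* A) {i i' : ι} (h : i = i') {x : G}
    (hx : x ∈ H i) (hx' : x ∈ H i') : ψ i ⟨x, hx⟩ = ψ i' ⟨x, hx'⟩ := by
  subst h; rfl

namespace WreathProduct

variable {G A B 𝓑 : Type*} [Group G] [Group A] [Group B] [MulAction B 𝓑]

@[simp]
theorem wreathAut_apply (b : B) (f : 𝓑 → A) (j : 𝓑) : wreathAut A B 𝓑 b f j = f (b⁻¹ • j) :=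
  rfl

theorem conj_inl_left_apply (c : 𝓑 → A) (x : WreathProduct A B 𝓑) (j : 𝓑) :
    (inl c * x * (inl c)⁻¹).left j = c j * x.left j * (c (x.right⁻¹ • j))⁻¹ := by
  simp

variable (φ : G →* B)

theorem orbitQuotMk_eq_iff {x y : 𝓑} :
    orbitQuotMk 𝓑 φ x = orbitQuotMk 𝓑 φ y ↔ ∃ s : G, φ s • y = x := by
  let _ : MulAction G 𝓑 := MulAction.compHom 𝓑 φ
  exact Quotient.eq''.trans <| (orbitRel_apply (G := G)).trans mem_orbit_iff

theorem orbitQuotMk_inv_smul (s : G) (j : 𝓑) :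
    orbitQuotMk 𝓑 φ ((φ s)⁻¹ • j) = orbitQuotMk 𝓑 φ j :=
  (orbitQuotMk_eq_iff φ).2 ⟨s⁻¹, by rw [map_inv]⟩

section Lift

variable {φ} (ρ : G →* WreathProduct A B 𝓑) (hρ : rightHom.comp ρ = φ)
include hρ

theorem right_eq_of_rightHom_comp_eq (s : G) : (ρ s).right = φ s :=
  DFunLike.congr_fun hρ s

theorem left_mul_apply_of_rightHom_comp_eq (s t : G) (j : 𝓑) :
    (ρ (s * t)).left j = (ρ s).left j * (ρ t).left ((φ s)⁻¹ • j) := by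
  rw [map_mul, mul_left, Pi.mul_apply, wreathAut_apply, right_eq_of_rightHom_comp_eq ρ hρ]

/-- The homomorphism `ρ_j : φ⁻¹(Stab_B j) →* A`. -/
def component (j : 𝓑) : (stabilizer B j).comap φ →* A where
  toFun s := (ρ s).left j
  map_one' := by simp
  map_mul' s t := by
    have hs : (φ s)⁻¹ • j = j := inv_smul_eq_iff.2 s.2.symm
    rw [Subgroup.coe_mul, left_mul_apply_of_rightHom_comp_eq ρ hρ, hs]

end Lift

variable (rep : orbitQuot 𝓑 φ → 𝓑)

theorem exists_transversal (hrep : ∀ ω, orbitQuotMk 𝓑 φ (rep ω) = ω) :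
    ∃ t : 𝓑 → G, (∀ j, φ (t j) • rep (orbitQuotMk 𝓑 φ j) = j) ∧ ∀ ω, t (rep ω) = 1 := by
  classical
  choose t₀ ht₀ using fun j => (orbitQuotMk_eq_iff φ).1 (hrep (orbitQuotMk 𝓑 φ j)).symm
  refine ⟨fun j => if j ∈ Set.range rep then 1 else t₀ j, fun j => ?_, fun ω => if_pos ⟨ω, rfl⟩⟩
  dsimp only
  split_ifs with h
  · obtain ⟨ω, rfl⟩ := h
    rw [map_one, one_smul, hrep]
  · exact ht₀ j

variable {φ rep} {t : 𝓑 → G} (ht : ∀ j, φ (t j) • rep (orbitQuotMk 𝓑 φ j) = j)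
include ht

theorem transversal_conj_mem (s : G) (j : 𝓑) :
    (t j)⁻¹ * s * t ((φ s)⁻¹ • j) ∈ (stabilizer B (rep (orbitQuotMk 𝓑 φ j))).comap φ := by
  have h := ht ((φ s)⁻¹ • j)
  rw [orbitQuotMk_inv_smul] at h
  rw [Subgroup.mem_comap, mem_stabilizer_iff, map_mul, map_mul, mul_smul, mul_smul, h,
    smul_inv_smul, map_inv, inv_smul_eq_iff, ht]

section InducedLift

variable (ψ : ∀ ω, (stabilizer B (rep ω)).comap φ →* A)

variable (rep) in
def inducedLift : G →* WreathProduct A B 𝓑 where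
  toFun s := ⟨fun j => ψ (orbitQuotMk 𝓑 φ j) ⟨_, transversal_conj_mem ht s j⟩, φ s⟩
  map_one' := by
    ext j
    · simp only [map_one, inv_one, one_smul, mul_one, inv_mul_cancel]
      exact map_one _
    · exact map_one φ
  map_mul' s s' := by
    ext j
    · have hu : (t j)⁻¹ * (s * s') * t ((φ (s * s'))⁻¹ • j) =
          ((t j)⁻¹ * s * t ((φ s)⁻¹ • j)) * ((t ((φ s)⁻¹ • j))⁻¹ * s' *
            t ((φ s')⁻¹ • (φ s)⁻¹ • j)) := by
        rw [map_mul, mul_inv_rev, mul_smul]; group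
      simp only [mul_left, Pi.mul_apply, wreathAut_apply, hu]
      rw [MonoidHom.apply_mk_congr_index ψ (orbitQuotMk_inv_smul φ s j) _ _, ← map_mul]
      · rfl
      · rw [← orbitQuotMk_inv_smul φ s j]
        exact transversal_conj_mem ht s' _
    · exact map_mul φ s s'

@[simp]
theorem inducedLift_right (s : G) : (inducedLift rep ht ψ s).right = φ s :=
  rfl

theorem inducedLift_left (s : G) (j : 𝓑) :
    (inducedLift rep ht ψ s).left j = ψ (orbitQuotMk 𝓑 φ j) ⟨_, transversal_conj_mem ht s j⟩ :=
  rfl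

variable (rep) in
theorem rightHom_comp_conj_inducedLift (c : 𝓑 → A) :
    rightHom.comp ((MulAut.conj (inl c)).toMonoidHom.comp (inducedLift rep ht ψ)) = φ := by
  ext s
  simp

theorem component_conj_inducedLift (hrep : ∀ ω, orbitQuotMk 𝓑 φ (rep ω) = ω)
    (ht₁ : ∀ ω, t (rep ω) = 1) {c : 𝓑 → A} {ω : orbitQuot 𝓑 φ} (hc : c (rep ω) = 1) :
    component _ (rightHom_comp_conj_inducedLift rep ht ψ c) (rep ω) = ψ ω := by
  ext s
  have hs : (φ s)⁻¹ • rep ω = rep ω := inv_smul_eq_iff.2 s.2.symm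
  show (inl c * inducedLift rep ht ψ s * (inl c)⁻¹).left (rep ω) = ψ ω s
  rw [conj_inl_left_apply, inducedLift_right, hs, hc, inv_one, one_mul, mul_one,
    inducedLift_left]
  simp only [hs, ht₁, inv_one, one_mul, mul_one]
  exact MonoidHom.apply_mk_congr_index ψ (hrep ω) _ s.2

theorem conj_inducedLift_transversal_left (ht₁ : ∀ ω, t (rep ω) = 1) {c : 𝓑 → A}
    (hc : ∀ ω, c (rep ω) = 1) (j : 𝓑) :
    (inl c * inducedLift rep ht ψ (t j) * (inl c)⁻¹).left j = c j := by
  have hj : (φ (t j))⁻¹ • j = rep (orbitQuotMk 𝓑 φ j) := inv_smul_eq_iff.2 (ht j).symm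
  rw [conj_inl_left_apply, inducedLift_right, hj, hc, inv_one, mul_one, inducedLift_left]
  simp only [hj, ht₁, mul_one, inv_mul_cancel]
  exact mul_eq_left.2 (map_one _)

end InducedLift

theorem eq_conj_inducedLift (ρ : G →* WreathProduct A B 𝓑) (hρ : rightHom.comp ρ = φ) :
    ρ = (MulAut.conj (inl fun j => (ρ (t j)).left j)).toMonoidHom.comp
      (inducedLift rep ht fun ω => component ρ hρ (rep ω)) := by
  refine MonoidHom.ext fun s => SemidirectProduct.ext ?_ ?_
  · funext j
    set j' := (φ s)⁻¹ • j
    have hj : (φ (t j))⁻¹ • j = rep (orbitQuotMk 𝓑 φ j) := inv_smul_eq_iff.2 (ht j).symm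
    -- both sides are the `j`-component of `ρ (s * t j')`
    have key : (ρ (t j)).left j * (ρ ((t j)⁻¹ * s * t j')).left (rep (orbitQuotMk 𝓑 φ j)) =
        (ρ s).left j * (ρ (t j')).left j' := by
      rw [← hj, ← left_mul_apply_of_rightHom_comp_eq ρ hρ,
        ← left_mul_apply_of_rightHom_comp_eq ρ hρ, mul_assoc, mul_inv_cancel_left]
    simp only [MulEquiv.toMonoidHom_eq_coe, MonoidHom.coe_comp, MonoidHom.coe_coe,
      Function.comp_apply, MulAut.conj_apply, conj_inl_left_apply, inducedLift_right]
    rw [eq_mul_inv_iff_mul_eq]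
    exact key.symm
  · simp [right_eq_of_rightHom_comp_eq ρ hρ]

variable (hrep : ∀ ω, orbitQuotMk 𝓑 φ (rep ω) = ω) (ht₁ : ∀ ω, t (rep ω) = 1)

def liftEquiv :
    {ρ : G →* WreathProduct A B 𝓑 // rightHom.comp ρ = φ} ≃
      (∀ ω, (stabilizer B (rep ω)).comap φ →* A) × {c : 𝓑 → A // ∀ ω, c (rep ω) = 1} where
  toFun ρ := (fun ω => component ρ.1 ρ.2 (rep ω),
    ⟨fun j => (ρ.1 (t j)).left j, fun ω => by simp [ht₁]⟩)
  invFun p := ⟨_, rightHom_comp_conj_inducedLift rep ht p.1 p.2.1⟩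
  left_inv ρ := Subtype.ext (eq_conj_inducedLift ht ρ.1 ρ.2).symm
  right_inv p := Prod.ext (funext fun _ => component_conj_inducedLift ht p.1 hrep ht₁ (p.2.2 _))
    (Subtype.ext (funext (conj_inducedLift_transversal_left ht p.1 ht₁ p.2.2)))

end WreathProduct

theorem wreath_lift_fiber_card_general
    {G A B 𝓑 : Type*} [Group G] [Group A] [Group B] [MulAction B 𝓑] [Finite 𝓑]
    (φ : G →* B) (rep : orbitQuot 𝓑 φ → 𝓑)
    (hrep : ∀ ω : orbitQuot 𝓑 φ, orbitQuotMk 𝓑 φ (rep ω) = ω) :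
    ∃ Ψ : {ρ : G →* WreathProduct A B 𝓑 // SemidirectProduct.rightHom.comp ρ = φ} →
        (∀ ω : orbitQuot 𝓑 φ, ↥((MulAction.stabilizer B (rep ω)).comap φ) →* A),
      (∀ ρ (ω : orbitQuot 𝓑 φ) s,
          Ψ ρ ω s = ((ρ : G →* WreathProduct A B 𝓑) (s : G)).left (rep ω)) ∧
      Function.Surjective Ψ ∧
      ∀ ψ, Nat.card {ρ // Ψ ρ = ψ} =
        Nat.card A ^ (Nat.card 𝓑 - Nat.card (orbitQuot 𝓑 φ)) := by
  obtain ⟨t, ht, ht₁⟩ := WreathProduct.exists_transversal φ rep hrep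
  let e := WreathProduct.liftEquiv (A := A) ht hrep ht₁
  refine ⟨fun ρ => (e ρ).1, fun _ _ _ => rfl, fun ψ => ?_, fun ψ => ?_⟩
  · exact ⟨e.symm (ψ, ⟨1, fun _ => rfl⟩), congrArg Prod.fst (e.apply_symm_apply _)⟩
  · rw [card_fiber_fst_of_equiv e,
      card_subtype_funs_eq_one_of_injective (Function.LeftInverse.injective hrep)]

/-- For any `φ : G →* B`, with `r` the number of orbits of the induced
action of `G` on `𝓑` and chosen orbit representatives `rep ω`, the map `Ψ` sending a
homomorphism `ρ : G →* A ≀ B` lying over `φ` to the tuple of homomorphisms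
`ρ_{rep ω} : S_ω →* A` (where `S_ω = φ⁻¹(Stab_B (rep ω))`) is surjective onto the product
of the sets of homomorphisms, with all fibers of size `|A|^(|𝓑| - r)`. -/
theorem wreath_lift_fiber_card
    {G A B 𝓑 : Type*} [Group G] [Group A] [Group B] [Finite A] [MulAction B 𝓑] [Finite 𝓑]
    (φ : G →* B) (rep : orbitQuot 𝓑 φ → 𝓑)
    (hrep : ∀ ω : orbitQuot 𝓑 φ, orbitQuotMk 𝓑 φ (rep ω) = ω) :
    ∃ Ψ : {ρ : G →* WreathProduct A B 𝓑 // SemidirectProduct.rightHom.comp ρ = φ} →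
        (∀ ω : orbitQuot 𝓑 φ, ↥((MulAction.stabilizer B (rep ω)).comap φ) →* A),
      (∀ ρ (ω : orbitQuot 𝓑 φ) s,
          Ψ ρ ω s = ((ρ : G →* WreathProduct A B 𝓑) (s : G)).left (rep ω)) ∧
      Function.Surjective Ψ ∧
      ∀ ψ, Nat.card {ρ // Ψ ρ = ψ} =
        Nat.card A ^ (Nat.card 𝓑 - Nat.card (orbitQuot 𝓑 φ)) :=
  wreath_lift_fiber_card_general φ rep hrep
end

section
/- Let G be a finite group such that for every g ∈ G and every k coprime to |G|, the element g^k is conjugate to g in G. Then for every n, the wreath product G ≀ S_n, defined as the semidirect product (Fin n → G) ⋊ Perm(Fin n) where Perm(Fin n) acts on functions f : Fin n → G by (σ·f)(j) = f(σ⁻¹(j)), has the same property: for every element w of G ≀ S_n and every k coprime to the order of G ≀ S_n, the element w^k is conjugate to w in G ≀ S_n. -/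
/-!
Write `w = (f, σ)`. For a point `x` on a cycle of `σ` of length `L`, the left component of `w ^ L`
at `x` is the product of the labels `f` around that cycle; its conjugacy class depends only on the
cycle. Two elements with the same permutation part are conjugate by an element of the base group
`α → G` as soon as these cycle products are conjugate cycle by cycle: the conjugator is forced
along each cycle once its value at a base point is chosen, and the choice closes up around the
cycle precisely because it conjugates the cycle products.

Since `k` is prime to the order of `σ`, choosing a base point `b` on each cycle, the map
`σ ^ m b ↦ σ ^ (k * m) b` is a permutation `τ` preserving the cycles with `τ σ τ⁻¹ = σ ^ k`.
Conjugating `w ^ k` by `τ⁻¹` gives an element with permutation part `σ` whose cycle products are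
the `k`-th powers of those of `w`, and these are conjugate to the cycle products of `w` by the
hypothesis on `G`.
-/

namespace MulAction

variable {G α : Type*} [Group G] [MulAction G α]

theorem pow_smul_eq_pow_smul_iff_modEq {g : G} {a : α} {m n : ℕ} :
    g ^ m • a = g ^ n • a ↔ m ≡ n [MOD period g a] := by
  rw [Nat.modEq_iff_dvd, ← zpow_smul_eq_iff_period_dvd, sub_eq_neg_add, zpow_add, mul_smul,
    zpow_neg, inv_smul_eq_iff, zpow_natCast, zpow_natCast, eq_comm]

theorem period_zpow_smul (g : G) (a : α) (i : ℤ) : period g (g ^ i • a) = period g a := by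
  have key (n : ℕ) : g ^ n • g ^ i • a = g ^ i • a ↔ g ^ n • a = a := by
    rw [smul_smul, ← zpow_natCast, ← zpow_add, add_comm, zpow_add, mul_smul, smul_left_cancel_iff]
  exact Nat.dvd_antisymm (pow_smul_eq_iff_period_dvd.mp ((key _).mpr (pow_period_smul g a)))
    (pow_smul_eq_iff_period_dvd.mp ((key _).mp (pow_period_smul g _)))

end MulAction

open MulAction

namespace Equiv.Perm

variable {α : Type*} (σ : Perm α)

theorem SameCycle.period_eq {σ : Perm α} {x y : α} (h : σ.SameCycle x y) :
    period σ x = period σ y := by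
  obtain ⟨i, rfl⟩ := h
  exact (period_zpow_smul σ x i).symm

noncomputable def cycleRep (x : α) : α := (Quotient.mk (SameCycle.setoid σ) x).out

theorem sameCycle_cycleRep (x : α) : σ.SameCycle (σ.cycleRep x) x :=
  Quotient.mk_out (s := SameCycle.setoid σ) x

theorem SameCycle.cycleRep_eq {σ : Perm α} {x y : α} (h : σ.SameCycle x y) :
    σ.cycleRep x = σ.cycleRep y :=
  congrArg Quotient.out (Quotient.sound (s := SameCycle.setoid σ) h)

theorem cycleRep_apply (x : α) : σ.cycleRep (σ x) = σ.cycleRep x :=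
  (sameCycle_apply_right.mpr (SameCycle.refl σ x)).cycleRep_eq.symm

variable [Finite α]

noncomputable def cycleIndex (x : α) : ℕ := (σ.sameCycle_cycleRep x).exists_nat_pow_eq.choose

theorem pow_cycleIndex_apply_cycleRep (x : α) : (σ ^ σ.cycleIndex x) (σ.cycleRep x) = x :=
  (σ.sameCycle_cycleRep x).exists_nat_pow_eq.choose_spec

theorem cycleIndex_modEq {x : α} {m : ℕ} (h : (σ ^ m) (σ.cycleRep x) = x) :
    σ.cycleIndex x ≡ m [MOD period σ (σ.cycleRep x)] :=
  pow_smul_eq_pow_smul_iff_modEq.mp ((σ.pow_cycleIndex_apply_cycleRep x).trans h.symm)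

noncomputable def powOnCycles (k : ℕ) (x : α) : α := (σ ^ (k * σ.cycleIndex x)) (σ.cycleRep x)

theorem powOnCycles_eq_of_pow_apply {k m : ℕ} {x : α} (h : (σ ^ m) (σ.cycleRep x) = x) :
    σ.powOnCycles k x = (σ ^ (k * m)) (σ.cycleRep x) :=
  pow_smul_eq_pow_smul_iff_modEq.mpr ((σ.cycleIndex_modEq h).mul_left k)

theorem sameCycle_powOnCycles (k : ℕ) (x : α) : σ.SameCycle x (σ.powOnCycles k x) :=
  (σ.sameCycle_cycleRep x).symm.trans (sameCycle_pow_right.mpr (SameCycle.refl _ _))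

theorem semiconj_powOnCycles (k : ℕ) : Function.Semiconj (σ.powOnCycles k) σ ⇑(σ ^ k) := by
  intro x
  have h : (σ ^ (σ.cycleIndex x + 1)) (σ.cycleRep (σ x)) = σ x := by
    rw [cycleRep_apply, pow_succ', mul_apply, pow_cycleIndex_apply_cycleRep]
  rw [σ.powOnCycles_eq_of_pow_apply h, cycleRep_apply, powOnCycles, ← mul_apply, ← pow_add,
    mul_add_one, add_comm]

theorem powOnCycles_injective {k : ℕ} (hk : k.Coprime (orderOf σ)) :
    Function.Injective (σ.powOnCycles k) := by
  intro x y hxy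
  have hrep : σ.cycleRep x = σ.cycleRep y := by
    rw [(σ.sameCycle_powOnCycles k x).cycleRep_eq, hxy,
      ← (σ.sameCycle_powOnCycles k y).cycleRep_eq]
  have hk' : (period σ (σ.cycleRep x)).gcd k = 1 :=
    (hk.coprime_dvd_right (period_dvd_orderOf _ _)).symm
  have hxy' : (σ ^ (k * σ.cycleIndex x)) (σ.cycleRep x)
      = (σ ^ (k * σ.cycleIndex y)) (σ.cycleRep x) := by
    rwa [powOnCycles, powOnCycles, ← hrep] at hxy
  rw [← σ.pow_cycleIndex_apply_cycleRep x, ← σ.pow_cycleIndex_apply_cycleRep y, ← hrep]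
  exact pow_smul_eq_pow_smul_iff_modEq.mpr
    ((pow_smul_eq_pow_smul_iff_modEq.mp hxy').cancel_left_of_coprime hk')

theorem exists_semiconjBy_pow_sameCycle {k : ℕ} (hk : k.Coprime (orderOf σ)) :
    ∃ τ : Perm α, SemiconjBy τ σ (σ ^ k) ∧ ∀ x, σ.SameCycle x (τ x) :=
  ⟨ofBijective _ (Finite.injective_iff_bijective.mp (σ.powOnCycles_injective hk)),
    Perm.ext (σ.semiconj_powOnCycles k), σ.sameCycle_powOnCycles k⟩

end Equiv.Perm

namespace WreathProduct

open Equiv SemidirectProduct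

variable {G α : Type*} [Group G]

@[simp]
theorem wreathAut_apply_s5 (σ : Perm α) (f : α → G) (x : α) :
    wreathAut G (Perm α) α σ f x = f (σ⁻¹ x) := rfl

theorem right_pow (w : WreathProduct G (Perm α) α) (m : ℕ) : (w ^ m).right = w.right ^ m :=
  map_pow rightHom w m

theorem left_pow_add_apply (w : WreathProduct G (Perm α) α) (m n : ℕ) (x : α) :
    (w ^ (m + n)).left x = (w ^ m).left x * (w ^ n).left ((w.right ^ m)⁻¹ x) := by
  rw [pow_add, mul_left, right_pow]; rfl

theorem left_pow_succ_apply (w : WreathProduct G (Perm α) α) (m : ℕ) (x : α) :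
    (w ^ (m + 1)).left (w.right x) = w.left (w.right x) * (w ^ m).left x := by
  rw [add_comm, left_pow_add_apply, pow_one, pow_one, Perm.coe_inv, symm_apply_apply]

/-- `f x * f (σ⁻¹ x) * ⋯ * f (σ⁻¹ ^ (L - 1) x)` for `w = (f, σ)`, where `L` is the length of the
cycle of `σ` through `x`. -/
noncomputable def cycleProd (w : WreathProduct G (Perm α) α) (x : α) : G :=
  (w ^ period w.right x).left x

theorem left_pow_period_mul_apply (w : WreathProduct G (Perm α) α) (x : α) (q : ℕ) :
    (w ^ (period w.right x * q)).left x = w.cycleProd x ^ q := by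
  induction q with
  | zero => simp
  | succ q ih =>
    have hfix : (w.right ^ (period w.right x * q)) x = x :=
      (pow_smul_eq_iff_period_dvd (m := w.right) (a := x)).mpr (dvd_mul_right _ _)
    rw [mul_add_one, left_pow_add_apply, ih, Perm.inv_eq_iff_eq.mpr hfix.symm, pow_succ]; rfl

theorem left_pow_add_period_apply (w : WreathProduct G (Perm α) α) (m : ℕ) (x : α) :
    (w ^ (m + period w.right x)).left ((w.right ^ m) x)
      = (w ^ m).left ((w.right ^ m) x) * w.cycleProd x := by
  rw [left_pow_add_apply, Perm.coe_inv, symm_apply_apply]; rfl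

theorem isConj_cycleProd_apply (w : WreathProduct G (Perm α) α) (x : α) :
    IsConj (w.cycleProd x) (w.cycleProd (w.right x)) := by
  have hL : period w.right (w.right x) = period w.right x :=
    (Perm.sameCycle_apply_right.mpr (Perm.SameCycle.refl _ x)).period_eq.symm
  have hfix : (w.right ^ period w.right x) (w.right x) = w.right x :=
    hL ▸ pow_period_smul w.right (w.right x)
  have h : w.left (w.right x) * w.cycleProd x = w.cycleProd (w.right x) * w.left (w.right x) :=
    calc w.left (w.right x) * w.cycleProd x = (w ^ (period w.right x + 1)).left (w.right x) :=
          (left_pow_succ_apply w _ x).symm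
      _ = w.cycleProd (w.right x) * w.left (w.right x) := by
          rw [left_pow_add_apply, Perm.inv_eq_iff_eq.mpr hfix.symm, pow_one, cycleProd, hL]
  exact isConj_iff.mpr ⟨_, by rw [h, mul_inv_cancel_right]⟩

theorem isConj_cycleProd_of_sameCycle [Finite α] (w : WreathProduct G (Perm α) α) {x y : α}
    (h : w.right.SameCycle x y) : IsConj (w.cycleProd x) (w.cycleProd y) := by
  obtain ⟨m, rfl⟩ := h.exists_nat_pow_eq
  clear h
  induction m with
  | zero => rfl
  | succ m ih =>
    rw [pow_succ', Perm.mul_apply]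
    exact ih.trans (isConj_cycleProd_apply w _)

section Conjugator

variable (w₁ w₂ : WreathProduct G (Perm α) α) (c : α → G)

/-- The value at `σ ^ m x` of a base-group element `h` with `h x = c x` and
`inl h * w₁ = w₂ * inl h`: that equation determines `h` along the cycle from its value at `x`. -/
def cycleConjugator (x : α) (m : ℕ) : G :=
  (w₂ ^ m).left ((w₁.right ^ m) x) * c x * ((w₁ ^ m).left ((w₁.right ^ m) x))⁻¹

noncomputable def conjugator [Finite α] (y : α) : G :=
  cycleConjugator w₁ w₂ c (w₁.right.cycleRep y) (w₁.right.cycleIndex y)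

variable {w₁ w₂ c}

theorem cycleConjugator_periodic (hright : w₁.right = w₂.right) {x : α}
    (hc : SemiconjBy (c x) (w₁.cycleProd x) (w₂.cycleProd x)) :
    Function.Periodic (cycleConjugator w₁ w₂ c x) (period w₁.right x) := by
  intro m
  have h₂ := left_pow_add_period_apply w₂ m x
  rw [← hright] at h₂
  have hσ : (w₁.right ^ (m + period w₁.right x)) x = (w₁.right ^ m) x :=
    pow_add_period_smul m w₁.right x
  rw [cycleConjugator, cycleConjugator, hσ, left_pow_add_period_apply, h₂, mul_inv_rev,
    mul_assoc _ (w₂.cycleProd x), ← hc.eq]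
  group

variable [Finite α]

theorem conjugator_eq_cycleConjugator (hright : w₁.right = w₂.right)
    (hc : ∀ x, SemiconjBy (c x) (w₁.cycleProd x) (w₂.cycleProd x)) {y : α} {m : ℕ}
    (h : (w₁.right ^ m) (w₁.right.cycleRep y) = y) :
    conjugator w₁ w₂ c y = cycleConjugator w₁ w₂ c (w₁.right.cycleRep y) m := by
  have hper := cycleConjugator_periodic hright (hc (w₁.right.cycleRep y))
  have hmod : w₁.right.cycleIndex y % _ = m % _ := w₁.right.cycleIndex_modEq h
  rw [conjugator, ← hper.map_mod_nat, hmod, hper.map_mod_nat]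

theorem conjugator_apply_mul (hright : w₁.right = w₂.right)
    (hc : ∀ x, SemiconjBy (c x) (w₁.cycleProd x) (w₂.cycleProd x)) (y : α) :
    conjugator w₁ w₂ c (w₁.right y) * w₁.left (w₁.right y)
      = w₂.left (w₁.right y) * conjugator w₁ w₂ c y := by
  have hy : (w₁.right ^ (w₁.right.cycleIndex y + 1)) (w₁.right.cycleRep y) = w₁.right y := by
    rw [pow_succ', Perm.mul_apply, Perm.pow_cycleIndex_apply_cycleRep]
  rw [conjugator_eq_cycleConjugator hright hc (w₁.right.cycleRep_apply y ▸ hy),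
    Perm.cycleRep_apply, cycleConjugator, hy, conjugator, cycleConjugator,
    Perm.pow_cycleIndex_apply_cycleRep, left_pow_succ_apply, hright, left_pow_succ_apply]
  group

end Conjugator

theorem isConj_of_isConj_cycleProd [Finite α] {w₁ w₂ : WreathProduct G (Perm α) α}
    (hright : w₁.right = w₂.right) (h : ∀ x, IsConj (w₁.cycleProd x) (w₂.cycleProd x)) :
    IsConj w₁ w₂ := by
  choose c hc using h
  refine isConj_iff.mpr ⟨inl (conjugator w₁ w₂ (fun x => c x)), mul_inv_eq_iff_eq_mul.mpr ?_⟩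
  ext y
  · obtain ⟨z, rfl⟩ := w₁.right.surjective y
    simpa [← hright] using conjugator_apply_mul hright hc z
  · simp [hright]

theorem left_inr_mul_mul_inv_apply (ρ : Perm α) (u : WreathProduct G (Perm α) α) (x : α) :
    (inr ρ * u * (inr ρ)⁻¹).left x = u.left (ρ⁻¹ x) := by
  simp only [mul_left, left_inr, right_inr, inv_left, map_one, inv_one, mul_one, one_mul]
  rfl

theorem right_inr_conj_pow {w : WreathProduct G (Perm α) α} {τ : Perm α} {k : ℕ}
    (hτ : SemiconjBy τ w.right (w.right ^ k)) :
    (inr τ⁻¹ * w ^ k * (inr τ⁻¹)⁻¹).right = w.right := by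
  simp only [mul_right, right_inr, inv_right, right_pow, inv_inv]
  rw [mul_assoc, ← hτ.eq, inv_mul_cancel_left]

theorem cycleProd_inr_conj_pow {w : WreathProduct G (Perm α) α} {τ : Perm α} {k : ℕ}
    (hτ : SemiconjBy τ w.right (w.right ^ k)) {x : α}
    (hx : period w.right (τ x) = period w.right x) :
    cycleProd (inr τ⁻¹ * w ^ k * (inr τ⁻¹)⁻¹) x = w.cycleProd (τ x) ^ k := by
  rw [cycleProd, right_inr_conj_pow hτ, conj_pow, left_inr_mul_mul_inv_apply, inv_inv, ← pow_mul,
    mul_comm, ← hx, left_pow_period_mul_apply]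

theorem natCard_dvd_natCard (x : α) : Nat.card G ∣ Nat.card (WreathProduct G (Perm α) α) := by
  classical
  exact Subgroup.card_dvd_of_injective (inl.comp (MonoidHom.mulSingle (fun _ : α => G) x))
    (inl_injective.comp (Pi.mulSingle_injective (M := fun _ : α => G) x))

theorem orderOf_right_dvd_natCard (w : WreathProduct G (Perm α) α) :
    orderOf w.right ∣ Nat.card (WreathProduct G (Perm α) α) :=
  (orderOf_map_dvd rightHom w).trans (orderOf_dvd_natCard w)

end WreathProduct

open WreathProduct SemidirectProduct in
theorem isConj_pow_wreath_symm_general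
    {G : Type*} [Group G]
    (hG : ∀ (g : G) (k : ℕ), Nat.Coprime k (Nat.card G) → IsConj g (g ^ k))
    (n : ℕ) (w : WreathProduct G (Equiv.Perm (Fin n)) (Fin n)) (k : ℕ)
    (hk : Nat.Coprime k (Nat.card (WreathProduct G (Equiv.Perm (Fin n)) (Fin n)))) :
    IsConj w (w ^ k) := by
  obtain ⟨τ, hτ, hτ_cycle⟩ :=
    w.right.exists_semiconjBy_pow_sameCycle (hk.coprime_dvd_right (orderOf_right_dvd_natCard w))
  have hconj : IsConj (w ^ k) (inr τ⁻¹ * w ^ k * (inr τ⁻¹)⁻¹) :=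
    isConj_iff.mpr ⟨inr τ⁻¹, rfl⟩
  refine (isConj_of_isConj_cycleProd (right_inr_conj_pow hτ).symm fun x => ?_).trans hconj.symm
  rw [cycleProd_inr_conj_pow hτ (hτ_cycle x).period_eq.symm]
  exact (hG _ k (hk.coprime_dvd_right (natCard_dvd_natCard x))).trans
    ((isConj_cycleProd_of_sameCycle w (hτ_cycle x)).pow k)

/-- If in the finite group `G` every element is conjugate to its `k`-th
power for all `k` coprime to `|G|`, then the same holds in the wreath product
`G ≀ Sₙ = (Fin n → G) ⋊ Perm (Fin n)`. -/
theorem isConj_pow_wreath_symm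
    {G : Type*} [Group G] [Finite G]
    (hG : ∀ (g : G) (k : ℕ), Nat.Coprime k (Nat.card G) → IsConj g (g ^ k))
    (n : ℕ) (w : WreathProduct G (Equiv.Perm (Fin n)) (Fin n)) (k : ℕ)
    (hk : Nat.Coprime k (Nat.card (WreathProduct G (Equiv.Perm (Fin n)) (Fin n)))) :
    IsConj w (w ^ k) :=
  isConj_pow_wreath_symm_general hG n w k hk
end

section
/- For every n, every Sylow 2-subgroup P of the symmetric group Perm(Fin n), every element g ∈ P, and every odd natural number k, the element g^k is conjugate to g within P (i.e., there exists h ∈ P with h g h⁻¹ = g^k). -/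
/-!
All Sylow 2-subgroups of `Perm (Fin n)` are isomorphic, so it suffices to exhibit one in which
every `g` is conjugate to all its odd powers. Writing `n = 2 ^ j + m` with `m < 2 ^ j`, the product of Sylow subgroups of
`Perm (Fin (2 ^ j))` and `Perm (Fin m)` is one, since adding `2 ^ j` to `m` produces no binary
carries and Legendre's formula gives `v₂ (n !) = v₂ ((2 ^ j)!) + v₂ (m !)`. A Sylow 2-subgroup of
`Perm (Fin (2 ^ j))` is the iterated wreath product `C₂ ≀ ⋯ ≀ C₂`, and the property passes from
`D` to `D ≀ C₂`: on the base group `(D × D)` it holds coordinatewise, and an element `(f, s)`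
outside it is conjugate, by the base group, to every `(g, s)` with `g 1 * g s` conjugate to
`f 1 * f s`; for odd `k` the element `(f, s) ^ k` is of this form with product `(f 1 * f s) ^ k`.
-/

open Equiv RegularWreathProduct
open scoped Nat

def OddPowConj (G : Type*) [Group G] : Prop :=
  ∀ (g : G) (k : ℕ), Odd k → IsConj g (g ^ k)

namespace OddPowConj

variable {G H : Type*} [Group G] [Group H]

theorem of_subsingleton [Subsingleton G] : OddPowConj G :=
  fun g k _ => by rw [Subsingleton.elim (g ^ k) g]

theorem of_surjective (hG : OddPowConj G) (f : G →* H) (hf : Function.Surjective f) :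
    OddPowConj H := by
  intro h k hk
  obtain ⟨g, rfl⟩ := hf h
  simpa only [map_pow] using f.map_isConj (hG g k hk)

theorem of_mulEquiv (hG : OddPowConj G) (e : G ≃* H) : OddPowConj H :=
  hG.of_surjective e.toMonoidHom e.surjective

theorem prod (hG : OddPowConj G) (hH : OddPowConj H) : OddPowConj (G × H) := by
  intro g k hk
  obtain ⟨a, ha⟩ := isConj_iff.1 (hG g.1 k hk)
  obtain ⟨b, hb⟩ := isConj_iff.1 (hH g.2 k hk)
  exact isConj_iff.2 ⟨(a, b), Prod.ext ha hb⟩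

theorem pi {ι : Type*} {G : ι → Type*} [∀ i, Group (G i)] (hG : ∀ i, OddPowConj (G i)) :
    OddPowConj (∀ i, G i) := by
  intro g k hk
  choose a ha using fun i => isConj_iff.1 (hG i (g i) k hk)
  exact isConj_iff.2 ⟨a, funext ha⟩

end OddPowConj

namespace RegularWreathProduct

variable {D Q : Type*} [Group D] [Group Q]

def ofLeft : (Q → D) →* D ≀ᵣ Q where
  toFun f := ⟨f, 1⟩
  map_one' := rfl
  map_mul' f g := by ext <;> simp [mul_def]

@[simp] theorem ofLeft_left (f : Q → D) : (ofLeft f).left = f := rfl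
@[simp] theorem ofLeft_right (f : Q → D) : (ofLeft f).right = 1 := rfl

section OrderTwo

variable {s : Q} (hss : s * s = 1)
include hss

theorem mk_pow_two_mul_add_one (f : Q → D) (j : ℕ) :
    (⟨f, s⟩ : D ≀ᵣ Q) ^ (2 * j + 1) = ⟨fun x => f x * (f (s * x) * f x) ^ j, s⟩ := by
  have hs : s⁻¹ = s := inv_eq_of_mul_eq_one_right hss
  have hsq : (⟨f, s⟩ : D ≀ᵣ Q) ^ 2 = ofLeft fun x => f x * f (s * x) := by
    rw [sq]
    ext x
    · simp [mul_def, hs]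
    · exact hss
  rw [pow_succ', pow_mul, hsq, ← map_pow (ofLeft : (Q → D) →* D ≀ᵣ Q)]
  ext x <;> simp [mul_def, hs, ← mul_assoc, hss, -map_pow]

variable (hQ : ∀ x : Q, x = 1 ∨ x = s) (hs : s ≠ 1)
include hQ hs

theorem isConj_mk_of_isConj {f g : Q → D} (h : IsConj (f 1 * f s) (g 1 * g s)) :
    IsConj (⟨f, s⟩ : D ≀ᵣ Q) ⟨g, s⟩ := by
  classical
  have hs' : s⁻¹ = s := inv_eq_of_mul_eq_one_right hss
  obtain ⟨z, hz⟩ := isConj_iff.1 h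
  -- `(h, 1)` conjugates `(f, s)` to `(fun x => h x * f x * (h (s * x))⁻¹, s)`
  refine isConj_iff.2 ⟨ofLeft fun x => if x = 1 then z else (g 1)⁻¹ * z * f 1, ?_⟩
  ext x
  · rcases hQ x with rfl | rfl
    · simp [mul_def, hs', hs]
    · simp [mul_def, hs', hs, hss]
      rw [eq_inv_mul_iff_mul_eq.2 hz.symm]
      group
  · simp [mul_def]

theorem isConj_mk_pow_two_mul_add_one (hD : OddPowConj D) (f : Q → D) (j : ℕ) :
    IsConj (⟨f, s⟩ : D ≀ᵣ Q) (⟨f, s⟩ ^ (2 * j + 1)) := by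
  rw [mk_pow_two_mul_add_one hss]
  refine isConj_mk_of_isConj hss hQ hs ?_
  have hprod : f 1 * (f (s * 1) * f 1) ^ j * (f s * (f (s * s) * f s) ^ j) =
      (f 1 * f s) ^ (2 * j + 1) := by
    rw [hss, mul_one, show 2 * j + 1 = j + 1 + j by ring, pow_add, pow_succ, ← mul_pow_mul]
    simp only [mul_assoc]
  rw [hprod]
  exact hD _ _ ⟨j, rfl⟩

end OrderTwo

end RegularWreathProduct

theorem OddPowConj.regularWreathProduct {D Q : Type*} [Group D] [Group Q] [Finite Q]
    (hD : OddPowConj D) (hQ : Nat.card Q = 2) : OddPowConj (D ≀ᵣ Q) := by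
  obtain ⟨s, hs, hs_unique⟩ := (Nat.card_eq_two_iff' (1 : Q)).1 hQ
  have hQs : ∀ x : Q, x = 1 ∨ x = s := fun x => or_iff_not_imp_left.2 (hs_unique x)
  have hss : s * s = 1 := by rw [← sq, ← hQ, pow_card_eq_one']
  rintro ⟨f, q⟩ k ⟨j, rfl⟩
  rcases hQs q with rfl | rfl
  · have := (ofLeft : (Q → D) →* D ≀ᵣ Q).map_isConj (pi (fun _ => hD) f _ ⟨j, rfl⟩)
    rwa [map_pow] at this
  · exact isConj_mk_pow_two_mul_add_one hss hQs hs hD f j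

theorem OddPowConj.iteratedWreathProduct {G : Type*} [Group G] [Finite G] (hG : Nat.card G = 2)
    (n : ℕ) : OddPowConj (IteratedWreathProduct G n) := by
  induction n with
  | zero => exact @of_subsingleton _ _ (inferInstanceAs (Subsingleton PUnit))
  | succ n ih => exact ih.regularWreathProduct hG

theorem Sylow.oddPowConj_of_card {G : Type*} [Group G] [Finite G] {p : ℕ} [Fact p.Prime]
    (P : Sylow p G) {H : Subgroup G} (hH : Nat.card H = p ^ (Nat.card G).factorization p)
    (h : OddPowConj H) : OddPowConj P :=
  h.of_mulEquiv (P.equiv (Sylow.ofCard H hH)).symm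

theorem oddPowConj_sylow_two_perm_of_card_eq_two_pow {α : Type*} [Finite α] {j : ℕ}
    (hα : Nat.card α = 2 ^ j) (P : Sylow 2 (Perm α)) : OddPowConj P :=
  (OddPowConj.iteratedWreathProduct (G := Multiplicative (ZMod 2)) (by simp) j).of_mulEquiv
    (Sylow.mulEquivIteratedWreathProduct 2 j α hα _ (by simp) P).symm

theorem Nat.digits_sum_pow_add {b j r : ℕ} (hb : 1 < b) (hr : r < b ^ j) :
    (b.digits (b ^ j + r)).sum = (b.digits r).sum + 1 := by
  have hlen : (b.digits r).length ≤ j := (Nat.digits_length_le_iff hb r).2 hr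
  have h := Nat.digits_append_zeroes_append_digits (k := j - (b.digits r).length) (m := 1)
    (n := r) hb one_pos
  rw [Nat.add_sub_cancel' hlen, mul_one, add_comm] at h
  rw [← h]
  simp [Nat.digits_of_lt b 1 one_ne_zero hb]

theorem Nat.factorization_factorial_pow_add {p j m : ℕ} (hp : p.Prime) (hm : m < p ^ j) :
    (p ^ j + m)!.factorization p = (p ^ j)!.factorization p + (m !).factorization p := by
  have := Fact.mk hp
  have hpj : (p.digits (p ^ j)).sum = 1 := by
    simpa using Nat.digits_sum_pow_add hp.one_lt (pow_pos hp.pos j)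
  have hm_digits := Nat.digit_sum_le p m
  apply Nat.eq_of_mul_eq_mul_left (Nat.sub_pos_of_lt hp.one_lt)
  simp only [Nat.factorization_def _ hp, mul_add, sub_one_mul_padicValNat_factorial,
    Nat.digits_sum_pow_add hp.one_lt hm, hpj]
  omega

theorem Sylow.oddPowConj_perm_fin_add {p a b : ℕ} [Fact p.Prime]
    (hab : (a + b)!.factorization p = (a !).factorization p + (b !).factorization p)
    (ha : ∀ P : Sylow p (Perm (Fin a)), OddPowConj P)
    (hb : ∀ P : Sylow p (Perm (Fin b)), OddPowConj P) (P : Sylow p (Perm (Fin (a + b)))) :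
    OddPowConj P := by
  let P₁ : Sylow p (Perm (Fin a)) := default
  let P₂ : Sylow p (Perm (Fin b)) := default
  let f : P₁ × P₂ →* Perm (Fin (a + b)) :=
    finSumFinEquiv.permCongrHom.toMonoidHom.comp
      ((Perm.sumCongrHom _ _).comp ((P₁ : Subgroup (Perm (Fin a))).subtype.prodMap
        (P₂ : Subgroup (Perm (Fin b))).subtype))
  have hf : Function.Injective f :=
    finSumFinEquiv.permCongrHom.injective.comp (Perm.sumCongrHom_injective.comp
      (Subtype.val_injective.prodMap Subtype.val_injective))
  refine P.oddPowConj_of_card (H := f.range) ?_ ?_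
  · rw [← Nat.card_congr (MonoidHom.ofInjective hf).toEquiv, Nat.card_prod,
      P₁.card_eq_multiplicity, P₂.card_eq_multiplicity]
    simp only [Nat.card_perm, Nat.card_fin, hab, pow_add]
  · exact ((ha P₁).prod (hb P₂)).of_mulEquiv (MonoidHom.ofInjective hf)

theorem oddPowConj_sylow_two_perm_fin (n : ℕ) (P : Sylow 2 (Perm (Fin n))) : OddPowConj P := by
  induction n using Nat.strong_induction_on with
  | _ n ih =>
  rcases n.eq_zero_or_pos with rfl | hn
  · exact OddPowConj.of_subsingleton
  obtain ⟨j, m, hm, rfl⟩ : ∃ j m, m < 2 ^ j ∧ n = 2 ^ j + m := by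
    have := Nat.lt_pow_succ_log_self one_lt_two n
    have := Nat.pow_log_le_self 2 hn.ne'
    exact ⟨Nat.log 2 n, n - 2 ^ Nat.log 2 n, by rw [pow_succ] at *; omega, by omega⟩
  exact Sylow.oddPowConj_perm_fin_add (Nat.factorization_factorial_pow_add Nat.prime_two hm)
    (oddPowConj_sylow_two_perm_of_card_eq_two_pow (Nat.card_fin _)) (ih m (by omega)) P

/-- In every Sylow 2-subgroup `P` of the symmetric group `Perm (Fin n)`,
every element `g ∈ P` is conjugate within `P` to `g ^ k` for every odd natural `k`. -/
theorem sylow_two_symm_conj_odd_pow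
    (n : ℕ) (P : Sylow 2 (Equiv.Perm (Fin n))) (g : Equiv.Perm (Fin n)) (hg : g ∈ P)
    (k : ℕ) (hk : Odd k) :
    ∃ h ∈ (P : Subgroup (Equiv.Perm (Fin n))), h * g * h⁻¹ = g ^ k := by
  obtain ⟨⟨h, hP⟩, hconj⟩ := isConj_iff.1 (oddPowConj_sylow_two_perm_fin n P ⟨g, hg⟩ k hk)
  exact ⟨h, hP, congrArg Subtype.val hconj⟩
end

section
/- For every n and every Sylow 2-subgroup P of the symmetric group Perm(Fin n), every complex character of P is rational-valued; that is, for every finite-dimensional complex representation V of P and every g ∈ P, the trace of the action of g on V is a rational number. -/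
/-!
Write `χ` for the character of `ρ`. If `g` has order dividing `2M` and `χ(g^m) = χ(g)` for every odd
`m`, then `B = M⁻¹ ∑_{j<M} ρ(g)^(2j+1)` satisfies `B³ = B` and `tr B = χ(g)`. Now `B` is the
difference of the two idempotents `(B² ± B)/2`, so `χ(g)` is an integer. The hypothesis on `χ`
holds when `g` is conjugate to all of its odd powers.

Every element of a Sylow `2`-subgroup of `Perm (Fin n)` has this property. Write `n = 2^a + r` with
`r < 2^a`. Then `v₂(n!) = v₂((2^a)!) + v₂(r!)`, so a Sylow subgroup is a product of one of
`Perm (Fin (2^a))` and one of `Perm (Fin r)`. The first is the iterated wreath product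
`C₂ ≀ ⋯ ≀ C₂`. In `D ≀ C₂` the class of `(f, τ)` is fixed by the class of `f 1 * f τ` in `D`, so
`D ≀ C₂` inherits the property from `D`.
-/

open Equiv Finset
open scoped Nat

section Trace

variable {K : Type*} [Field K]

theorem isIdempotentElem_half_smul_sq_add_smul [NeZero (2 : K)] {A : Type*} [Ring A]
    [Algebra K A] {b : A} (hb : b ^ 3 = b) {s : K} (hs : s * s = 1) :
    IsIdempotentElem ((2 : K)⁻¹ • (b ^ 2 + s • b)) := by
  have hsq : (b ^ 2 + s • b) * (b ^ 2 + s • b) = (2 : K) • (b ^ 2 + s • b) := by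
    have hb4 : b ^ 2 * b ^ 2 = b ^ 2 := by rw [← pow_add, pow_succ, hb, sq]
    have hb3 : b * b ^ 2 = b := by rw [← pow_succ', hb]
    have hb3' : b ^ 2 * b = b := by rw [← pow_succ, hb]
    rw [add_mul, mul_add, mul_add, smul_mul_assoc, mul_smul_comm, smul_mul_smul_comm, hs, hb4, hb3,
      hb3', ← sq, one_smul, two_smul]
    abel
  rw [IsIdempotentElem, smul_mul_smul_comm, hsq, smul_smul, mul_assoc,
    inv_mul_cancel₀ two_ne_zero, mul_one]

theorem sum_odd_pow_pow_three_of_pow_two_mul_eq_one {R : Type*} [Ring R] {f : R} {M : ℕ}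
    (hf : f ^ (2 * M) = 1) :
    (∑ j ∈ range M, f ^ (2 * j + 1)) ^ 3 = (M * M) • ∑ j ∈ range M, f ^ (2 * j + 1) := by
  set S := ∑ j ∈ range M, (f ^ 2) ^ j
  have hA : ∑ j ∈ range M, f ^ (2 * j + 1) = f * S := by
    simp only [S, mul_sum, ← pow_mul, ← pow_succ']
  have hgS : f ^ 2 * S = S := by
    rw [← sub_eq_zero, ← sub_one_mul, mul_geom_sum, ← pow_mul, hf, sub_self]
  have hgpowS (j : ℕ) : (f ^ 2) ^ j * S = S := by
    induction j with
    | zero => rw [pow_zero, one_mul]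
    | succ j ih => rw [pow_succ, mul_assoc, hgS, ih]
  have hSS : S * S = M • S := by
    rw [sum_mul, sum_congr rfl fun j _ => hgpowS j, sum_const, card_range]
  have hfS : S * f = f * S :=
    Commute.sum_left _ _ _ fun j _ => (Commute.self_pow f 2).symm.pow_left j
  have hAA : f * S * (f * S) = M • S := by
    rw [mul_assoc, ← mul_assoc S, hfS, ← mul_assoc, ← mul_assoc, ← sq, mul_assoc, hSS,
      mul_smul_comm, hgS]
  rw [hA, pow_succ, sq, hAA, smul_mul_assoc, ← mul_assoc, hfS, mul_assoc, hSS, mul_smul_comm,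
    mul_smul]

namespace LinearMap

theorem trace_eq_of_isConj {R M : Type*} [CommRing R] [AddCommGroup M] [Module R M]
    {f g : Module.End R M} (h : IsConj f g) : trace R M f = trace R M g := by
  obtain ⟨c, hc⟩ := h
  rw [← trace_conj R f c, hc.eq, mul_assoc, Units.mul_inv, mul_one]

variable {V : Type*} [AddCommGroup V] [Module K V] [FiniteDimensional K V]

theorem exists_int_trace_eq_of_pow_three_eq_self [NeZero (2 : K)] {B : Module.End K V}
    (hB : B ^ 3 = B) : ∃ z : ℤ, trace K V B = z := by
  set E : K → Module.End K V := fun s => (2 : K)⁻¹ • (B ^ 2 + s • B)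
  have htrace (s : K) (hs : s * s = 1) : trace K V (E s) = Module.finrank K (range (E s)) :=
    (IsIdempotentElem.isProj_range _ (isIdempotentElem_half_smul_sq_add_smul hB hs)).trace
  have hdiff : E 1 - E (-1) = B := by
    rw [← smul_sub, add_sub_add_left_eq_sub, one_smul, neg_one_smul, sub_neg_eq_add, ← two_smul K,
      smul_smul, inv_mul_cancel₀ two_ne_zero, one_smul]
  refine ⟨Module.finrank K (range (E 1)) - Module.finrank K (range (E (-1))), ?_⟩
  rw [← hdiff, map_sub, htrace 1 (one_mul 1), htrace (-1) (by norm_num)]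
  push_cast
  rfl

theorem exists_int_trace_eq_of_trace_odd_pow [CharZero K] {f : Module.End K V} {M : ℕ}
    (hM : M ≠ 0) (hf : f ^ (2 * M) = 1) (htr : ∀ m, Odd m → trace K V (f ^ m) = trace K V f) :
    ∃ z : ℤ, trace K V f = z := by
  have hMK : (M : K) ≠ 0 := Nat.cast_ne_zero.mpr hM
  set A := ∑ j ∈ Finset.range M, f ^ (2 * j + 1)
  have hcube : ((M : K)⁻¹ • A) ^ 3 = (M : K)⁻¹ • A := by
    rw [smul_pow, sum_odd_pow_pow_three_of_pow_two_mul_eq_one hf, ← Nat.cast_smul_eq_nsmul K,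
      smul_smul]
    congr 1
    push_cast
    field_simp
  obtain ⟨z, hz⟩ := exists_int_trace_eq_of_pow_three_eq_self hcube
  refine ⟨z, ?_⟩
  rw [← hz, map_smul, map_sum, sum_congr rfl fun j _ => htr _ (odd_two_mul_add_one j), sum_const,
    Finset.card_range, nsmul_eq_mul, smul_eq_mul, inv_mul_cancel_left₀ hMK]

end LinearMap

theorem Representation.exists_int_trace_eq {G V : Type*} [CharZero K] [Group G] [AddCommGroup V]
    [Module K V] [FiniteDimensional K V] (ρ : Representation K G V) {g : G} (hg : IsOfFinOrder g)
    (hconj : ∀ m, Odd m → IsConj g (g ^ m)) : ∃ z : ℤ, LinearMap.trace K V (ρ g) = z :=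
  LinearMap.exists_int_trace_eq_of_trace_odd_pow hg.orderOf_pos.ne'
    (by rw [← map_pow, pow_mul', pow_orderOf_eq_one, one_pow, map_one])
    fun m hm => by
      rw [← map_pow]
      exact (LinearMap.trace_eq_of_isConj (ρ.map_isConj (hconj m hm))).symm

end Trace

def ConjToOddPowers (G : Type*) [Group G] : Prop :=
  ∀ (g : G) (m : ℕ), Odd m → IsConj g (g ^ m)

namespace ConjToOddPowers

variable {G H : Type*} [Group G] [Group H]

theorem of_mulEquiv (e : G ≃* H) (hG : ConjToOddPowers G) : ConjToOddPowers H := by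
  intro h m hm
  simpa using e.toMonoidHom.map_isConj (hG (e.symm h) m hm)

theorem of_subsingleton [Subsingleton G] : ConjToOddPowers G :=
  fun _ _ _ => by rw [Subsingleton.elim (_ ^ _) _]

theorem pi {ι : Type*} {G : ι → Type*} [∀ i, Group (G i)] (hG : ∀ i, ConjToOddPowers (G i)) :
    ConjToOddPowers (∀ i, G i) := by
  intro g m hm
  choose c hc using fun i => isConj_iff.mp (hG i (g i) m hm)
  exact isConj_iff.mpr ⟨c, funext hc⟩

theorem prod (hG : ConjToOddPowers G) (hH : ConjToOddPowers H) : ConjToOddPowers (G × H) := by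
  intro g m hm
  obtain ⟨c, hc⟩ := isConj_iff.mp (hG g.1 m hm)
  obtain ⟨d, hd⟩ := isConj_iff.mp (hH g.2 m hm)
  exact isConj_iff.mpr ⟨(c, d), Prod.ext hc hd⟩

end ConjToOddPowers

section WreathTwo

local notation "C₂" => Multiplicative (ZMod 2)
local notation "τ" => Multiplicative.ofAdd (1 : ZMod 2)

namespace Multiplicative

theorem eq_one_or_eq_ofAdd_one_of_zmod_two (x : C₂) : x = 1 ∨ x = τ := by
  revert x
  decide

@[simp] theorem inv_zmod_two (x : C₂) : x⁻¹ = x := by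
  revert x
  decide

@[simp] theorem mul_self_zmod_two (x : C₂) : x * x = 1 := by
  revert x
  decide

end Multiplicative

namespace RegularWreathProduct

open Multiplicative (eq_one_or_eq_ofAdd_one_of_zmod_two)

variable {D Q : Type*} [Group D] [Group Q]

def baseHom : (Q → D) →* D ≀ᵣ Q where
  toFun f := ⟨f, 1⟩
  map_one' := rfl
  map_mul' f g := by ext <;> simp [mul_def]

@[simp] theorem baseHom_apply (f : Q → D) : baseHom f = ⟨f, 1⟩ := rfl

theorem baseHom_mul_mk (f g : Q → D) (q : Q) : baseHom f * ⟨g, q⟩ = ⟨f * g, q⟩ := by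
  ext <;> simp [mul_def]

theorem isConj_mk_swap (f : C₂ → D) :
    IsConj (⟨f, τ⟩ : D ≀ᵣ C₂) ⟨Pi.mulSingle 1 (f 1 * f τ), τ⟩ := by
  refine isConj_iff.mpr ⟨baseHom (Pi.mulSingle τ (f τ)⁻¹), ?_⟩
  ext x
  · rcases eq_one_or_eq_ofAdd_one_of_zmod_two x with rfl | rfl <;> simp [mul_def, inv_left]
  · simp [mul_def]

theorem isConj_mk_mulSingle {c d : D} (h : IsConj c d) :
    IsConj (⟨Pi.mulSingle 1 c, τ⟩ : D ≀ᵣ C₂) ⟨Pi.mulSingle 1 d, τ⟩ := by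
  obtain ⟨u, rfl⟩ := isConj_iff.mp h
  refine isConj_iff.mpr ⟨baseHom fun _ => u, ?_⟩
  ext x
  · rcases eq_one_or_eq_ofAdd_one_of_zmod_two x with rfl | rfl <;> simp [mul_def, inv_left]
  · simp [mul_def]

theorem mk_mulSingle_pow_two_mul_add_one (c : D) (s : ℕ) :
    (⟨Pi.mulSingle 1 c, τ⟩ : D ≀ᵣ C₂) ^ (2 * s + 1) =
      ⟨(fun _ => c ^ s) * Pi.mulSingle 1 c, τ⟩ := by
  have hsq : (⟨Pi.mulSingle 1 c, τ⟩ : D ≀ᵣ C₂) ^ 2 = baseHom fun _ => c := by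
    ext x
    · rcases eq_one_or_eq_ofAdd_one_of_zmod_two x with rfl | rfl <;> simp [mul_def, sq]
    · simp [mul_def, sq]
  rw [pow_succ, pow_mul, hsq, ← map_pow, baseHom_mul_mk]
  rfl

theorem _root_.ConjToOddPowers.regularWreathProduct (hD : ConjToOddPowers D) :
    ConjToOddPowers (D ≀ᵣ C₂) := by
  rintro ⟨f, q⟩ m ⟨s, rfl⟩
  rcases eq_one_or_eq_ofAdd_one_of_zmod_two q with rfl | rfl
  · have h := baseHom.map_isConj ((ConjToOddPowers.pi fun _ => hD) f _ ⟨s, rfl⟩)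
    rwa [map_pow] at h
  · set c := f 1 * f τ
    have hc : IsConj (c ^ (2 * s + 1)) c := (hD c _ ⟨s, rfl⟩).symm
    have key : IsConj ((⟨Pi.mulSingle 1 c, τ⟩ : D ≀ᵣ C₂) ^ (2 * s + 1)) ⟨Pi.mulSingle 1 c, τ⟩ := by
      rw [mk_mulSingle_pow_two_mul_add_one]
      refine (isConj_mk_swap _).trans (isConj_mk_mulSingle ?_)
      convert hc using 1
      simp only [Pi.mul_apply, Pi.mulSingle_eq_same, Pi.mulSingle_eq_of_ne (show τ ≠ 1 by decide),
        mul_one]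
      group
    exact (isConj_mk_swap f).trans (key.symm.trans ((isConj_mk_swap f).pow _).symm)

end RegularWreathProduct

theorem ConjToOddPowers.iteratedWreathProduct (k : ℕ) :
    ConjToOddPowers (IteratedWreathProduct C₂ k) := by
  induction k with
  | zero => exact of_subsingleton (G := PUnit)
  | succ k ih => exact ih.regularWreathProduct

end WreathTwo

theorem ConjToOddPowers.sylow_perm_of_card_eq_two_pow {α : Type*} [Finite α] {k : ℕ}
    (hα : Nat.card α = 2 ^ k) (P : Sylow 2 (Perm α)) : ConjToOddPowers P :=
  (iteratedWreathProduct k).of_mulEquiv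
    (Sylow.mulEquivIteratedWreathProduct 2 k α hα _ (by simp) P).symm

noncomputable def Sylow.mulEquivOfMulEquiv {p : ℕ} [Fact p.Prime] {G H : Type*} [Group G]
    [Group H] [Finite G] (e : G ≃* H) (P : Sylow p G) (Q : Sylow p H) : P ≃* Q :=
  have : Finite H := .of_equiv G e
  (P.1.equivMapOfInjective e.toMonoidHom e.injective).trans
    (Sylow.equiv (P.mapSurjective e.surjective) Q)

noncomputable def Sylow.mulEquivProdOfPermSum {p : ℕ} [hp : Fact p.Prime] {α β : Type*}
    [Finite α] [Finite β] (h : padicValNat p (Nat.card α + Nat.card β)! =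
      padicValNat p (Nat.card α)! + padicValNat p (Nat.card β)!)
    (R : Sylow p (Perm (α ⊕ β))) (P : Sylow p (Perm α)) (Q : Sylow p (Perm β)) : R ≃* P × Q :=
  let e := (P.1.prod Q.1).equivMapOfInjective _ Perm.sumCongrHom_injective
  have hcard : Nat.card ((P.1.prod Q.1).map (Perm.sumCongrHom α β)) =
      p ^ (Nat.card (Perm (α ⊕ β))).factorization p := by
    simp only [← Nat.card_congr e.toEquiv, Nat.card_congr (P.1.prodEquiv Q.1).toEquiv,
      Nat.card_prod, Sylow.card_eq_multiplicity, Nat.card_perm, Nat.card_sum,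
      Nat.factorization_def _ hp.out, h, pow_add]
  (Sylow.equiv R (Sylow.ofCard _ hcard)).trans (e.symm.trans (P.1.prodEquiv Q.1))

theorem padicValNat_factorial_pow_add {p : ℕ} [hp : Fact p.Prime] {a r : ℕ} (hr : r < p ^ a) :
    padicValNat p (p ^ a + r)! = padicValNat p (p ^ a)! + padicValNat p r ! := by
  have hlog : ∀ n ≤ p ^ a + r, Nat.log p n < a + 1 := fun n hn =>
    Nat.log_lt_of_lt_pow' (Nat.succ_ne_zero a) <| calc
      n < 2 * p ^ a := by omega
      _ ≤ p ^ (a + 1) := by rw [pow_succ']; gcongr; exact hp.out.two_le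
  rw [padicValNat_factorial (hlog _ le_rfl), padicValNat_factorial (hlog _ (by omega)),
    padicValNat_factorial (hlog _ (by omega)), ← sum_add_distrib]
  refine sum_congr rfl fun i hi => Nat.add_div_of_dvd_right (pow_dvd_pow p ?_)
  exact Nat.lt_succ_iff.mp (mem_Ico.mp hi).2

theorem ConjToOddPowers.sylow_two_perm_fin (n : ℕ) (P : Sylow 2 (Perm (Fin n))) :
    ConjToOddPowers P := by
  induction n using Nat.strong_induction_on with
  | _ n ih =>
  rcases Nat.eq_zero_or_pos n with rfl | hn
  · exact of_subsingleton
  obtain ⟨a, r, hr, rfl⟩ : ∃ a r, r < 2 ^ a ∧ n = 2 ^ a + r := by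
    have hle := Nat.pow_log_le_self 2 hn.ne'
    have hlt := Nat.lt_pow_succ_log_self one_lt_two n
    rw [pow_succ] at hlt
    exact ⟨Nat.log 2 n, n - 2 ^ Nat.log 2 n, by omega, by omega⟩
  obtain ⟨P₁⟩ : Nonempty (Sylow 2 (Perm (Fin (2 ^ a)))) := inferInstance
  obtain ⟨P₂⟩ : Nonempty (Sylow 2 (Perm (Fin r))) := inferInstance
  obtain ⟨R⟩ : Nonempty (Sylow 2 (Perm (Fin (2 ^ a) ⊕ Fin r))) := inferInstance
  have hR : ConjToOddPowers R :=
    ((sylow_perm_of_card_eq_two_pow (Nat.card_fin _) P₁).prod (ih r (by omega) P₂)).of_mulEquiv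
      (Sylow.mulEquivProdOfPermSum (by simpa using padicValNat_factorial_pow_add hr) R P₁ P₂).symm
  exact hR.of_mulEquiv (Sylow.mulEquivOfMulEquiv finSumFinEquiv.permCongrHom R P)

/-- Every complex character of a Sylow 2-subgroup of a symmetric group
`Perm (Fin n)` is rational-valued: for every finite-dimensional complex representation
`V` of `P` and every `g ∈ P`, the trace of the action of `g` on `V` is rational. -/
theorem sylow_two_symm_character_rational
    (n : ℕ) (P : Sylow 2 (Equiv.Perm (Fin n)))
    (V : Type*) [AddCommGroup V] [Module ℂ V] [FiniteDimensional ℂ V]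
    (ρ : Representation ℂ ↥(P : Subgroup (Equiv.Perm (Fin n))) V)
    (g : ↥(P : Subgroup (Equiv.Perm (Fin n)))) :
    ∃ q : ℚ, LinearMap.trace ℂ V (ρ g) = (q : ℂ) := by
  obtain ⟨z, hz⟩ :=
    ρ.exists_int_trace_eq (isOfFinOrder_of_finite g) (ConjToOddPowers.sylow_two_perm_fin n P g)
  exact ⟨z, by rw [hz, Rat.cast_intCast]⟩
end

section
/- Let D₄ be the subgroup of Perm(Fin 4) generated by the 4-cycle r = (0 1 2 3) and the transposition s = (0 2) (a dihedral group of order 8). For g ∈ D₄, let d(g) = 4 − (the number of orbits of the cyclic subgroup generated by g acting on Fin 4). Then for every odd positive integer q, the sum over all pairs (g, h) ∈ D₄ × D₄ with h g h⁻¹ = g^q of (1/q)^{d(g)} (as a rational number) equals 8 + 8/q + 16/q² + 8/q³. -/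
/-!
Every element of `D₄` has order dividing `4` and is conjugate to its inverse, so for odd `q` the
power `g ^ q ∈ {g, g⁻¹}` is conjugate to `g`. Hence `{h | h g h⁻¹ = g ^ q}` is a coset of the
centraliser of `g`, and the sum equals the same sum over commuting pairs, which no longer depends
on `q`. Counting commuting pairs `(g, h)` by `d(g)` gives `8, 8, 16, 8` pairs with `d = 0, 1, 2, 3`.
-/

open Equiv

/-- The dihedral group of order 8 inside `Perm (Fin 4)`, generated by the 4-cycle
`(0 1 2 3)` and the transposition `(0 2)`. -/
def dihedralD4 : Subgroup (Perm (Fin 4)) :=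
  Subgroup.closure {c[(0 : Fin 4), 1, 2, 3], swap (0 : Fin 4) 2}

/-- The counting function attached to the permutation representation of a permutation of
`Fin 4` (the tame discriminant exponent): `4` minus the number of orbits of the cyclic
group generated by `g` acting on `Fin 4`. -/
noncomputable def dExp (g : Perm (Fin 4)) : ℕ :=
  4 - Nat.card (MulAction.orbitRel.Quotient (Subgroup.zpowers g) (Fin 4))

open MulAction Finset

section Conjugation

variable {G : Type*} [Group G]

theorem finsum_conj_eq_eq_finsum_commute {M : Type*} [AddCommMonoid M] (φ : G → G)
    (hφ : ∀ g, IsConj g (φ g)) (f : G → M) :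
    ∑ᶠ (p : G × G) (_ : p.2 * p.1 * p.2⁻¹ = φ p.1), f p.1 =
      ∑ᶠ (p : G × G) (_ : p.2 * p.1 * p.2⁻¹ = p.1), f p.1 := by
  choose k hk using fun g => isConj_iff.1 (hφ g)
  rw [← finsum_comp_equiv ((Equiv.refl G).prodShear fun g => Equiv.mulLeft (k g))]
  refine finsum_congr fun ⟨g, h⟩ => finsum_congr_Prop ?_ fun _ => rfl
  have hconj : k g * h * g * (k g * h)⁻¹ = k g * (h * g * h⁻¹) * (k g)⁻¹ := by group
  simp only [prodShear_apply, refl_apply, coe_mulLeft, hconj, ← hk g, mul_left_inj,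
    mul_right_inj]

theorem isConj_pow_of_odd {g : G} (h4 : g ^ 4 = 1) (hinv : IsConj g g⁻¹) {q : ℕ} (hq : Odd q) :
    IsConj g (g ^ q) := by
  have hq4 : q % 4 = 1 ∨ q % 4 = 3 := by
    obtain ⟨k, rfl⟩ := hq
    omega
  rw [pow_eq_pow_mod q h4]
  rcases hq4 with h | h
  · rw [h, pow_one]
  · rwa [h, ← inv_eq_of_mul_eq_one_left (a := g ^ 3) (by rw [← pow_succ, h4])]

end Conjugation

theorem orbitRel_zpowers_eq_sameCycle_setoid {α : Type*} (g : Perm α) :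
    orbitRel (Subgroup.zpowers g) α = Perm.SameCycle.setoid g := by
  ext a b
  rw [orbitRel_apply, mem_orbit_iff, Subgroup.exists_zpowers]
  exact ⟨fun ⟨k, hk⟩ => Perm.SameCycle.symm ⟨k, hk⟩, fun h => h.symm⟩

instance {α : Type*} [Fintype α] [DecidableEq α] (g : Perm α) :
    DecidableRel (Perm.SameCycle.setoid g).r :=
  Perm.instDecidableRelSameCycle g

theorem dExp_eq_four_sub_card_sameCycle (g : Perm (Fin 4)) :
    dExp g = 4 - Fintype.card (Quotient (Perm.SameCycle.setoid g)) := by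
  rw [dExp, orbitRel.Quotient, orbitRel_zpowers_eq_sameCycle_setoid, Nat.card_eq_fintype_card]

def dihedralD4Elems : Finset (Perm (Fin 4)) :=
  univ.image fun p : Fin 4 × Fin 2 =>
    c[(0 : Fin 4), 1, 2, 3] ^ (p.1 : ℕ) * swap (0 : Fin 4) 2 ^ (p.2 : ℕ)

theorem mem_dihedralD4_iff {g : Perm (Fin 4)} : g ∈ dihedralD4 ↔ g ∈ dihedralD4Elems := by
  constructor
  · intro hg
    let H : Subgroup (Perm (Fin 4)) :=
      { carrier := {g | g ∈ dihedralD4Elems}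
        one_mem' := by decide
        mul_mem' := fun {a b} => by revert a b; decide
        inv_mem' := fun {a} => by revert a; decide }
    refine (Subgroup.closure_le H).2 ?_ hg
    rintro _ (rfl | rfl) <;> show _ ∈ dihedralD4Elems <;> decide
  · simp only [dihedralD4Elems, mem_image, mem_univ, true_and]
    rintro ⟨⟨i, j⟩, rfl⟩
    exact mul_mem (pow_mem (Subgroup.subset_closure (by simp)) _)
      (pow_mem (Subgroup.subset_closure (by simp)) _)

instance : DecidablePred (· ∈ dihedralD4) := fun _ => decidable_of_iff _ mem_dihedralD4_iff.symm

theorem pow_four_of_mem_dihedralD4 (g : dihedralD4) : g ^ 4 = 1 := by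
  revert g
  decide

theorem isConj_inv_of_mem_dihedralD4 (g : dihedralD4) : IsConj g g⁻¹ := by
  rw [isConj_iff]
  revert g
  decide

theorem map_dExp_filter_commute_dihedralD4 :
    (univ.filter fun p : dihedralD4 × dihedralD4 => p.2 * p.1 * p.2⁻¹ = p.1).val.map
        (fun p => dExp p.1) =
      Multiset.replicate 8 0 + Multiset.replicate 8 1 + Multiset.replicate 16 2 +
        Multiset.replicate 8 3 := by
  simp only [dExp_eq_four_sub_card_sameCycle]
  decide

theorem finsum_commute_dihedralD4_pow_dExp {R : Type*} [CommSemiring R] (x : R) :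
    ∑ᶠ (p : dihedralD4 × dihedralD4) (_ : p.2 * p.1 * p.2⁻¹ = p.1), x ^ dExp p.1 =
      8 + 8 * x + 16 * x ^ 2 + 8 * x ^ 3 := by
  have hsum := congrArg (fun m => (m.map (x ^ ·)).sum) map_dExp_filter_commute_dihedralD4
  simp only [Multiset.map_map, Function.comp_def] at hsum
  rw [finsum_cond_eq_sum_of_cond_iff _ (t := univ.filter fun p => p.2 * p.1 * p.2⁻¹ = p.1)
    (fun _ => by simp), sum_eq_multiset_sum, hsum]
  simp only [Multiset.map_add, Multiset.map_replicate, Multiset.sum_add, Multiset.sum_replicate,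
    pow_zero, pow_one, nsmul_eq_mul]
  push_cast
  ring

theorem d4_mass_discriminant_general (q : ℕ) (hq : Odd q) :
    ∑ᶠ (p : ↥dihedralD4 × ↥dihedralD4) (_ : p.2 * p.1 * p.2⁻¹ = p.1 ^ q),
        ((1 : ℚ) / q) ^ dExp (p.1 : Perm (Fin 4)) =
      8 + 8 / (q : ℚ) + 16 / (q : ℚ) ^ 2 + 8 / (q : ℚ) ^ 3 := by
  have hconj (g : dihedralD4) : IsConj g (g ^ q) :=
    isConj_pow_of_odd (pow_four_of_mem_dihedralD4 g) (isConj_inv_of_mem_dihedralD4 g) hq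
  rw [finsum_conj_eq_eq_finsum_commute (· ^ q) hconj (fun g => ((1 : ℚ) / q) ^ dExp g),
    finsum_commute_dihedralD4_pow_dExp]
  ring

/-- For every odd positive integer `q`, the total (tame) mass of `D₄`
with the discriminant counting function `d` is
`Σ_{(g,h) ∈ D₄², hgh⁻¹ = g^q} (1/q)^{d g} = 8 + 8/q + 16/q² + 8/q³`. -/
theorem d4_mass_discriminant (q : ℕ) (hq : Odd q) (hq0 : 0 < q) :
    ∑ᶠ (p : ↥dihedralD4 × ↥dihedralD4) (_ : p.2 * p.1 * p.2⁻¹ = p.1 ^ q),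
        ((1 : ℚ) / q) ^ dExp (p.1 : Perm (Fin 4)) =
      8 + 8 / (q : ℚ) + 16 / (q : ℚ) ^ 2 + 8 / (q : ℚ) ^ 3 :=
  d4_mass_discriminant_general q hq
end

section
/- Let D₄ be the subgroup of Perm(Fin 4) generated by the 4-cycle r = (0 1 2 3) and the transposition s = (0 2) (a dihedral group of order 8). Define c : D₄ → ℕ by: c(identity) = 0; c((0 2)) = c((1 3)) = c((0 1)(2 3)) = c((0 3)(1 2)) = 1; c((0 2)(1 3)) = 2; c((0 1 2 3)) = c((0 3 2 1)) = 2. Then for every odd positive integer q, the sum over all pairs (g, h) ∈ D₄ × D₄ with h g h⁻¹ = g^q of (1/q)^{c(g)} (as a rational number) equals 8 + 16/q + 16/q². -/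
open Equiv

/-- The wreath-product counting function on `D₄`: `0` on the identity, `1` on each of the
four reflections `(0 2)`, `(1 3)`, `(0 1)(2 3)`, `(0 3)(1 2)`, and `2` on the remaining
elements `(0 2)(1 3)`, `(0 1 2 3)`, `(0 3 2 1)` of `D₄`. -/
def cWreath (g : Perm (Fin 4)) : ℕ :=
  if g = 1 then 0
  else if g = swap (0 : Fin 4) 2 ∨ g = swap (1 : Fin 4) 3 ∨
      g = swap (0 : Fin 4) 1 * swap (2 : Fin 4) 3 ∨
      g = swap (0 : Fin 4) 3 * swap (1 : Fin 4) 2 then 1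
  else 2

/-!
`D₄` is the centralizer in `Perm (Fin 4)` of the double transposition `(0 2)(1 3)`, i.e. the
stabilizer of the block partition `{{0, 2}, {1, 3}}`; this description makes membership
decidable. As `D₄` has exponent `4` and `q` is odd, the condition `h g h⁻¹ = g ^ q` only depends
on `q % 4 ∈ {1, 3}`. In both cases the solutions `(g, h)` split as `8` pairs with `c g = 0`,
`16` with `c g = 1` and `16` with `c g = 2`: for `q ≡ 3` the involutions are counted as
before, and each 4-cycle is inverted by exactly four elements (the four reflections) instead of
being centralized by four (the rotations).
-/

open Finset

instance Subgroup.decidableMemCentralizerSingleton {G : Type*} [Group G] [DecidableEq G]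
    (x : G) : DecidablePred (· ∈ Subgroup.centralizer {x}) :=
  fun _ => decidable_of_iff _ Subgroup.mem_centralizer_singleton_iff.symm

section TwistedConjugacy

variable {G : Type*} [Group G] [Fintype G] [DecidableEq G]

def twistedConjPairs (H : Subgroup G) [DecidablePred (· ∈ H)] (k : ℕ) : Finset (G × G) :=
  {p ∈ ({g | g ∈ H} : Finset G) ×ˢ ({g | g ∈ H} : Finset G) |
    p.2 * p.1 * p.2⁻¹ = p.1 ^ k}

theorem finsum_eq_sum_twistedConjPairs {M : Type*} [AddCommMonoid M] (H : Subgroup G)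
    [DecidablePred (· ∈ H)] (k : ℕ) (f : G → M) :
    ∑ᶠ (p : H × H) (_ : p.2 * p.1 * p.2⁻¹ = p.1 ^ k), f p.1 =
      ∑ p ∈ twistedConjPairs H k, f p.1 := by
  have hS : ∀ g, g ∈ ({g | g ∈ H} : Finset G) ↔ g ∈ H := fun g => by simp
  simp only [finsum_eq_if, finsum_eq_sum_of_fintype, twistedConjPairs, sum_filter, sum_product,
    Fintype.sum_prod_type, sum_subtype _ hS, Subtype.ext_iff, Subgroup.coe_mul, Subgroup.coe_inv,
    Subgroup.coe_pow]

theorem twistedConjPairs_mod {H : Subgroup G} [DecidablePred (· ∈ H)] {n : ℕ}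
    (hH : ∀ g ∈ H, g ^ n = 1) (k : ℕ) : twistedConjPairs H k = twistedConjPairs H (k % n) := by
  refine filter_congr fun ⟨g, h⟩ => ?_
  simp only [mem_filter, mem_product, mem_univ, true_and]
  rintro ⟨hg, -⟩
  rw [← pow_eq_pow_mod k (hH g hg)]

end TwistedConjugacy

theorem dihedralD4_eq_centralizer :
    dihedralD4 = Subgroup.centralizer {swap (0 : Fin 4) 2 * swap 1 3} := by
  have hdecomp : ∀ g ∈ Subgroup.centralizer {swap (0 : Fin 4) 2 * swap 1 3},
      ∃ i : Fin 4, ∃ j : Fin 2,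
        g = c[(0 : Fin 4), 1, 2, 3] ^ (i : ℕ) * swap 0 2 ^ (j : ℕ) := by
    decide
  refine le_antisymm ((Subgroup.closure_le _).2 ?_) fun g hg => ?_
  · rintro g (rfl | rfl) <;> rw [SetLike.mem_coe] <;> decide
  · obtain ⟨i, j, rfl⟩ := hdecomp g hg
    exact mul_mem (pow_mem (Subgroup.subset_closure (.inl rfl)) _)
      (pow_mem (Subgroup.subset_closure (.inr rfl)) _)

set_option maxRecDepth 100000 in
theorem pow_four_eq_one_of_mem_centralizer :
    ∀ g ∈ Subgroup.centralizer {swap (0 : Fin 4) 2 * swap 1 3}, g ^ 4 = 1 := by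
  decide

set_option maxRecDepth 100000 in
theorem twistedConjPairs_map_cWreath {k : ℕ} (hk : k = 1 ∨ k = 3) :
    (twistedConjPairs (Subgroup.centralizer {swap (0 : Fin 4) 2 * swap 1 3}) k).val.map
        (cWreath ∘ Prod.fst) =
      Multiset.replicate 8 0 + Multiset.replicate 16 1 + Multiset.replicate 16 2 := by
  rcases hk with rfl | rfl <;> decide

theorem sum_twistedConjPairs_pow_cWreath {R : Type*} [CommSemiring R] (x : R) {k : ℕ}
    (hk : k = 1 ∨ k = 3) :
    ∑ p ∈ twistedConjPairs (Subgroup.centralizer {swap (0 : Fin 4) 2 * swap 1 3}) k,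
        x ^ cWreath p.1 = 8 + 16 * x + 16 * x ^ 2 := by
  rw [sum_eq_multiset_sum, show (fun p : Perm (Fin 4) × Perm (Fin 4) ↦ x ^ cWreath p.1) =
    (x ^ ·) ∘ cWreath ∘ Prod.fst from rfl, ← Multiset.map_map, twistedConjPairs_map_cWreath hk]
  simp only [Multiset.map_add, Multiset.map_replicate, Multiset.sum_add, Multiset.sum_replicate,
    nsmul_eq_mul]
  norm_num

theorem d4_mass_wreath_general (q : ℕ) (hq : Odd q) :
    ∑ᶠ (p : ↥dihedralD4 × ↥dihedralD4) (_ : p.2 * p.1 * p.2⁻¹ = p.1 ^ q),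
        ((1 : ℚ) / q) ^ cWreath (p.1 : Perm (Fin 4)) =
      8 + 16 / (q : ℚ) + 16 / (q : ℚ) ^ 2 := by
  have hq4 : q % 4 = 1 ∨ q % 4 = 3 := Nat.odd_mod_four_iff.mp (Nat.odd_iff.mp hq)
  rw [dihedralD4_eq_centralizer, finsum_eq_sum_twistedConjPairs _ _ (((1 : ℚ) / q) ^ cWreath ·),
    twistedConjPairs_mod pow_four_eq_one_of_mem_centralizer,
    sum_twistedConjPairs_pow_cWreath _ hq4]
  ring

/-- For every odd positive integer `q`, the total (tame) mass of `D₄`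
with the wreath-product counting function `c` is
`Σ_{(g,h) ∈ D₄², hgh⁻¹ = g^q} (1/q)^{c g} = 8 + 16/q + 16/q²`. -/
theorem d4_mass_wreath (q : ℕ) (hq : Odd q) (hq0 : 0 < q) :
    ∑ᶠ (p : ↥dihedralD4 × ↥dihedralD4) (_ : p.2 * p.1 * p.2⁻¹ = p.1 ^ q),
        ((1 : ℚ) / q) ^ cWreath (p.1 : Perm (Fin 4)) =
      8 + 16 / (q : ℚ) + 16 / (q : ℚ) ^ 2 :=
  d4_mass_wreath_general q hq
end

section
/- Let A, B, C be groups acting on finite sets 𝓐, 𝓑, 𝓒 respectively. Then there is a group isomorphism Φ : A ≀ (B ≀ C) → (A ≀ B) ≀ C, where B ≀ C is regarded with its natural action on 𝓑 × 𝓒 and A ≀ B with its natural action on 𝓐 × 𝓑, together with a bijection θ : 𝓐 × (𝓑 × 𝓒) → (𝓐 × 𝓑) × 𝓒 (the canonical associativity bijection) which is equivariant: for all w ∈ A ≀ (B ≀ C) and all x ∈ 𝓐 × (𝓑 × 𝓒), θ(w · x) = Φ(w) · θ(x). -/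
/-- The natural imprimitive action of `A ≀ B` on `𝓐 × 𝓑`:
`(f, b) • (a, j) = (f (b • j) • a, b • j)`. -/
instance wreathMulAction {A B 𝓐 𝓑 : Type*} [Group A] [Group B] [MulAction A 𝓐]
    [MulAction B 𝓑] : MulAction (WreathProduct A B 𝓑) (𝓐 × 𝓑) where
  smul w x := (w.left (w.right • x.2) • x.1, w.right • x.2)
  one_smul x := by
    show ((1 : WreathProduct A B 𝓑).left _ • x.1, (1 : WreathProduct A B 𝓑).right • x.2) = x
    simp
  mul_smul w w' x := by
    show ((w * w').left ((w * w').right • x.2) • x.1, (w * w').right • x.2)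
      = (w.left (w.right • (w'.left (w'.right • x.2) • x.1, w'.right • x.2).2) •
          (w'.left (w'.right • x.2) • x.1), w.right • (w'.right • x.2))
    simp [SemidirectProduct.mul_left, SemidirectProduct.mul_right, wreathAut, mul_smul,
      Pi.mul_apply, inv_smul_smul]

/-! Currying `f : 𝓑 × 𝓒 → A` turns `(f, (g, c)) ∈ A ≀ (B ≀ C)` into
`(fun k => (f (·, k), g k), c) ∈ (A ≀ B) ≀ C`, and the action on `𝓐 × 𝓑 × 𝓒` is unchanged.
Multiplicativity comes down to `(g, c)⁻¹` moving `(j, k)` to `((g k)⁻¹ • j, c⁻¹ • k)`. -/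

namespace WreathProduct

variable {A B C 𝓐 𝓑 𝓒 : Type*} [Group A] [Group B] [Group C]
  [MulAction A 𝓐] [MulAction B 𝓑] [MulAction C 𝓒]

lemma mul_left_apply (w w' : WreathProduct A B 𝓑) (j : 𝓑) :
    (w * w').left j = w.left j * w'.left (w.right⁻¹ • j) := rfl

lemma smul_def (w : WreathProduct A B 𝓑) (x : 𝓐 × 𝓑) :
    w • x = (w.left (w.right • x.2) • x.1, w.right • x.2) := rfl

lemma inv_smul_def (w : WreathProduct A B 𝓑) (x : 𝓐 × 𝓑) :
    w⁻¹ • x = ((w.left x.2)⁻¹ • x.1, w.right⁻¹ • x.2) := by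
  simp [smul_def, SemidirectProduct.inv_left, SemidirectProduct.inv_right, wreathAut]

def assoc : WreathProduct A (WreathProduct B C 𝓒) (𝓑 × 𝓒) ≃*
    WreathProduct (WreathProduct A B 𝓑) C 𝓒 where
  toFun w := ⟨fun k => ⟨fun j => w.left (j, k), w.right.left k⟩, w.right.right⟩
  invFun w := ⟨fun x => (w.left x.2).left x.1, ⟨fun k => (w.left k).right, w.right⟩⟩
  left_inv _ := rfl
  right_inv _ := rfl
  map_mul' w w' := by
    refine SemidirectProduct.ext (funext fun k => ?_) rfl
    refine SemidirectProduct.ext (funext fun j => ?_) rfl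
    change (w * w').left (j, k) = _
    rw [mul_left_apply, inv_smul_def]
    rfl

lemma prodAssoc_symm_smul (w : WreathProduct A (WreathProduct B C 𝓒) (𝓑 × 𝓒))
    (x : 𝓐 × 𝓑 × 𝓒) :
    (Equiv.prodAssoc 𝓐 𝓑 𝓒).symm (w • x) = assoc w • (Equiv.prodAssoc 𝓐 𝓑 𝓒).symm x := rfl

end WreathProduct

theorem wreathProduct_assoc_general
    {A B C 𝓐 𝓑 𝓒 : Type*} [Group A] [Group B] [Group C]
    [MulAction A 𝓐] [MulAction B 𝓑] [MulAction C 𝓒] :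
    ∃ Φ : WreathProduct A (WreathProduct B C 𝓒) (𝓑 × 𝓒) ≃*
        WreathProduct (WreathProduct A B 𝓑) C 𝓒,
      ∀ (w : WreathProduct A (WreathProduct B C 𝓒) (𝓑 × 𝓒)) (x : 𝓐 × (𝓑 × 𝓒)),
        (Equiv.prodAssoc 𝓐 𝓑 𝓒).symm (w • x) = Φ w • (Equiv.prodAssoc 𝓐 𝓑 𝓒).symm x :=
  ⟨WreathProduct.assoc, WreathProduct.prodAssoc_symm_smul⟩

/-- Associativity of the wreath product: there is a group isomorphism
`Φ : A ≀ (B ≀ C) ≃* (A ≀ B) ≀ C` which is equivariant for the natural imprimitive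
actions with respect to the canonical associativity bijection
`θ : 𝓐 × (𝓑 × 𝓒) ≃ (𝓐 × 𝓑) × 𝓒`. -/
theorem wreathProduct_assoc
    {A B C 𝓐 𝓑 𝓒 : Type*} [Group A] [Group B] [Group C]
    [MulAction A 𝓐] [MulAction B 𝓑] [MulAction C 𝓒]
    [Finite 𝓐] [Finite 𝓑] [Finite 𝓒] :
    ∃ Φ : WreathProduct A (WreathProduct B C 𝓒) (𝓑 × 𝓒) ≃*
        WreathProduct (WreathProduct A B 𝓑) C 𝓒,
      ∀ (w : WreathProduct A (WreathProduct B C 𝓒) (𝓑 × 𝓒)) (x : 𝓐 × (𝓑 × 𝓒)),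
        (Equiv.prodAssoc 𝓐 𝓑 𝓒).symm (w • x) = Φ w • (Equiv.prodAssoc 𝓐 𝓑 𝓒).symm x :=
  wreathProduct_assoc_general
end
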